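/- arXiv:1907.03254 — 8 statements merged into one kernel-verified Lean document; each statement's English description precedes it below -/
import Mathlib

section
/- If ω < κ ≤ 2^ω, then there is a coloring of the ordered pairs of distinct elements of κ (with countably many colors) admitting no monochromatic path of length 3: there are no three distinct α, β, γ < κ with c(α,β) = c(β,γ). Concretely, fixing an injection α ↦ b_α from κ into 2^ω, define the departure level m(α,β) as the least m with b_α(m) ≠ b_β(m), and color the ordered pair (α,β) by the pair (m(α,β), b_α(m(α,β))); this coloring has the stated property. -/
/-!
Code each ordinal `α < κ` by a distinct branch `b α : ℕ → Bool`, and colour `(α, β)` by the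
level `m` where `b α` and `b β` first differ together with the bit `b α m`. If `(α, β)` and
`(β, γ)` had the same colour `(m, i)`, then `b α m = i = b β m`, although `m` is a level where
`b α` and `b β` differ.
-/

universe u v

open Cardinal PiNat

noncomputable def departureColor {β : Type*} (x y : ℕ → β) : ℕ × β :=
  (firstDiff x y, x (firstDiff x y))

theorem departureColor_ne {β : Type*} {x y : ℕ → β} (hxy : x ≠ y) (z : ℕ → β) :
    departureColor x y ≠ departureColor y z := by
  intro h
  have hlevel : firstDiff x y = firstDiff y z := congrArg Prod.fst h
  have hbit : x (firstDiff x y) = y (firstDiff y z) := congrArg Prod.snd h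
  exact apply_firstDiff_ne hxy (hlevel ▸ hbit)

theorem Set.exists_injOn_of_lift_mk_le {α : Type u} {β : Type v} [Nonempty β] {s : Set α}
    (h : lift.{v} #s ≤ lift.{u} #β) : ∃ f : α → β, s.InjOn f := by
  obtain ⟨e⟩ := lift_mk_le'.mp h
  refine ⟨Function.extend Subtype.val e (fun _ => Classical.arbitrary β), ?_⟩
  intro x hx y hy hxy
  rw [Subtype.val_injective.extend_apply e _ ⟨x, hx⟩,
    Subtype.val_injective.extend_apply e _ ⟨y, hy⟩] at hxy
  exact congrArg Subtype.val (e.injective hxy)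

theorem exists_injOn_Iio_ord_of_le_continuum {κ : Cardinal} (h : κ ≤ 2 ^ ℵ₀) :
    ∃ b : Ordinal → ℕ → Bool, (Set.Iio κ.ord).InjOn b :=
  Set.exists_injOn_of_lift_mk_le <| by
    simpa [mk_Iio_ordinal, mk_arrow] using h

theorem no_monochromatic_ordered_path_general (κ : Cardinal)
    (h2 : κ ≤ 2 ^ Cardinal.aleph0) :
    ∃ c : Ordinal → Ordinal → ℕ × Bool,
      ¬∃ α β γ : Ordinal, α < κ.ord ∧ β < κ.ord ∧ γ < κ.ord ∧
        α ≠ β ∧ β ≠ γ ∧ α ≠ γ ∧ c α β = c β γ := by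
  obtain ⟨b, hb⟩ := exists_injOn_Iio_ord_of_le_continuum h2
  refine ⟨fun α β => departureColor (b α) (b β), ?_⟩
  rintro ⟨α, β, γ, hα, hβ, -, hαβ, -, -, hcolor⟩
  exact departureColor_ne (hb.ne hα hβ hαβ) (b γ) hcolor

/-- If `ℵ₀ < κ ≤ 2^ℵ₀`, there is a coloring of the ordered pairs of distinct
ordinals below `κ` with countably many colors (colors are pairs `(m, b) : ℕ × Bool`,
as in the departure-level coloring) admitting no monochromatic path of length 3:
there are no distinct `α, β, γ < κ` with `c α β = c β γ`. -/
theorem no_monochromatic_ordered_path (κ : Cardinal) (h1 : Cardinal.aleph0 < κ)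
    (h2 : κ ≤ 2 ^ Cardinal.aleph0) :
    ∃ c : Ordinal → Ordinal → ℕ × Bool,
      ¬∃ α β γ : Ordinal, α < κ.ord ∧ β < κ.ord ∧ γ < κ.ord ∧
        α ≠ β ∧ β ≠ γ ∧ α ≠ γ ∧ c α β = c β γ :=
  no_monochromatic_ordered_path_general κ h2
end

section
/- ω₂ →_path (ω)²_ω: for every coloring c : [ω₂]² → ω there exist a sequence (β_n : n ∈ ω) of pairwise distinct ordinals below ω₂ and a color γ ∈ ω such that c{β_n, β_{n+1}} = γ for every n ∈ ω. This holds in ZFC regardless of the value of 2^ω. -/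
open Cardinal Set

namespace PathRel
noncomputable section
universe u

def kappa : Ordinal.{u} := (Cardinal.aleph 2).ord

def Nb (c : Ordinal.{u} → Ordinal.{u} → ℕ) (γ : ℕ) (x : Ordinal.{u}) : Set Ordinal.{u} :=
  {y | y < kappa ∧ y ≠ x ∧ c x y = γ}

def W (c : Ordinal.{u} → Ordinal.{u} → ℕ) (γ : ℕ) (a : Ordinal.{u}) : Set Ordinal.{u} :=
  {x | x < kappa ∧ ∀ b, b < a → (Nb c γ x ∩ W c γ b).Infinite}
termination_by a

lemma mem_W_iff {c : Ordinal.{u} → Ordinal.{u} → ℕ} {γ : ℕ} {a x : Ordinal.{u}} :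
    x ∈ W c γ a ↔ x < kappa ∧ ∀ b < a, (Nb c γ x ∩ W c γ b).Infinite := by
  rw [W]; rfl

lemma W_anti {c : Ordinal.{u} → Ordinal.{u} → ℕ} {γ : ℕ} {a b : Ordinal.{u}} (h : b ≤ a) :
    W c γ a ⊆ W c γ b := by
  intro x hx
  rw [mem_W_iff] at hx ⊢
  exact ⟨hx.1, fun b' hb' => hx.2 b' (hb'.trans_le h)⟩

def exitSet (c : Ordinal.{u} → Ordinal.{u} → ℕ) (γ : ℕ) (x : Ordinal.{u}) : Set Ordinal.{u} :=
  {b | (Nb c γ x ∩ W c γ b).Finite}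

def Bex (c : Ordinal.{u} → Ordinal.{u} → ℕ) (γ : ℕ) (x : Ordinal.{u}) : Ordinal.{u} :=
  sInf (exitSet c γ x)

lemma infinite_of_lt_Bex {c : Ordinal.{u} → Ordinal.{u} → ℕ} {γ : ℕ} {x b : Ordinal.{u}}
    (h : b < Bex c γ x) : (Nb c γ x ∩ W c γ b).Infinite := by
  have : b ∉ exitSet c γ x := notMem_of_lt_csInf' h
  exact this

lemma Bex_mem {c : Ordinal.{u} → Ordinal.{u} → ℕ} {γ : ℕ} {x : Ordinal.{u}}
    (h : (exitSet c γ x).Nonempty) : (Nb c γ x ∩ W c γ (Bex c γ x)).Finite :=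
  csInf_mem h

def Fs (c : Ordinal.{u} → Ordinal.{u} → ℕ) (x : Ordinal.{u}) : Set Ordinal.{u} :=
  ⋃ γ : ℕ, (Nb c γ x ∩ W c γ (Bex c γ x))

lemma edge_mem (c : Ordinal.{u} → Ordinal.{u} → ℕ) (hsym : ∀ a b, c a b = c b a)
    {x y : Ordinal.{u}} (hx : x < kappa) (hy : y < kappa) (hne : x ≠ y) :
    y ∈ Fs c x ∨ x ∈ Fs c y := by
  set γ := c x y with hγ
  rcases le_total (Bex c γ x) (Bex c γ y) with h | h
  · left
    refine mem_iUnion.2 ⟨γ, ⟨hy, hne.symm, hγ.symm⟩, ?_⟩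
    rw [mem_W_iff]
    exact ⟨hy, fun b hb => infinite_of_lt_Bex (hb.trans_le h)⟩
  · right
    refine mem_iUnion.2 ⟨γ, ⟨hx, hne, by rw [hγ, hsym]⟩, ?_⟩
    rw [mem_W_iff]
    exact ⟨hx, fun b hb => infinite_of_lt_Bex (hb.trans_le h)⟩

lemma exists_path {c : Ordinal.{u} → Ordinal.{u} → ℕ} {γ : ℕ} {V : Set Ordinal.{u}}
    (hne : V.Nonempty) (hgood : ∀ x ∈ V, (Nb c γ x ∩ V).Infinite)
    (hVsub : V ⊆ Iio kappa) :
    ∃ β : ℕ → Ordinal.{u}, Function.Injective β ∧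
      (∀ n, β n < kappa) ∧ ∀ n : ℕ, c (β n) (β (n + 1)) = γ := by
  obtain ⟨x₀, hx₀⟩ := hne
  have step : ∀ x, x ∈ V → ∀ s : Finset Ordinal.{u},
      ∃ y, (y ∈ Nb c γ x ∧ y ∈ V) ∧ y ∉ s := by
    intro x hx s
    obtain ⟨y, hy⟩ := ((hgood x hx).diff s.finite_toSet).nonempty
    exact ⟨y, ⟨hy.1.1, hy.1.2⟩, hy.2⟩
  choose f hf using step
  let g : ℕ → {p : Ordinal.{u} × Finset Ordinal.{u} // p.1 ∈ V} := fun n =>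
    Nat.rec ⟨(x₀, {x₀}), hx₀⟩
      (fun _ p => ⟨(f p.1.1 p.2 p.1.2, insert (f p.1.1 p.2 p.1.2) p.1.2),
        (hf p.1.1 p.2 p.1.2).1.2⟩) n
  set β : ℕ → Ordinal.{u} := fun n => (g n).1.1 with hβ
  have key : ∀ n, (β (n+1) ∈ Nb c γ (β n) ∧ β (n+1) ∈ V) ∧ β (n+1) ∉ (g n).1.2 :=
    fun n => hf (g n).1.1 (g n).2 (g n).1.2
  have hins : ∀ n, (g (n+1)).1.2 = insert (β (n+1)) (g n).1.2 := fun n => rfl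
  have hmem : ∀ n, β n ∈ (g n).1.2 := by
    intro n
    cases n with
    | zero => exact Finset.mem_singleton_self x₀
    | succ k => rw [hins k]; exact Finset.mem_insert_self _ _
  have hsub : ∀ m n, m ≤ n → (g m).1.2 ⊆ (g n).1.2 := by
    intro m n h
    induction n, h using Nat.le_induction with
    | base => exact Finset.Subset.refl _
    | succ k hk ih => rw [hins k]; exact ih.trans (Finset.subset_insert _ _)
  have hltne : ∀ m n, m < n → β m ≠ β n := by
    intro m n h heq
    obtain ⟨k, rfl⟩ : ∃ k, n = k + 1 := ⟨n - 1, by omega⟩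
    exact (key k).2 (heq ▸ hsub m k (by omega) (hmem m))
  refine ⟨β, ?_, ?_, ?_⟩
  · intro a b hab
    by_contra h
    rcases Ne.lt_or_gt h with h' | h'
    · exact hltne a b h' hab
    · exact hltne b a h' hab.symm
  · intro n
    exact hVsub (g n).2
  · intro n
    exact ((key n).1.1).2.2


/-- Case 2 is impossible: the set mapping `Fs` would have no free pair. -/
lemma no_total_exit (c : Ordinal.{u} → Ordinal.{u} → ℕ) (hsym : ∀ a b, c a b = c b a) :
    ¬ ∀ γ : ℕ, ∀ x, x < kappa.{u} → (exitSet c γ x).Nonempty := by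
  intro hc
  have hFc : ∀ x, x < kappa.{u} → (Fs c x).Countable := by
    intro x hx
    exact Set.countable_iUnion fun γ => (Bex_mem (hc γ x hx)).countable
  set A : Set Ordinal.{u} := Set.Iio (Cardinal.aleph.{u} 1).ord with hA
  have h12 : (Cardinal.aleph.{u} 1).ord < kappa.{u} :=
    Cardinal.ord_lt_ord.2 (Cardinal.aleph_lt_aleph.2 one_lt_two)
  have hAκ : A ⊆ Set.Iio kappa.{u} := fun x hx => lt_trans hx h12
  set U : Set Ordinal.{u} := A ∪ ⋃ x : A, Fs c x.1 with hU
  have hmkA : #A = Cardinal.lift.{u + 1, u} (Cardinal.aleph.{u} 1) := by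
    rw [hA, Ordinal.mk_Iio_ordinal, Cardinal.card_ord]
  have haleph1 : (ℵ₀ : Cardinal.{u+1}) ≤ Cardinal.lift.{u + 1, u} (Cardinal.aleph.{u} 1) :=
    Cardinal.aleph0_le_lift.2 (Cardinal.aleph0_le_aleph 1)
  have hmkU : #U < #(Set.Iio kappa.{u}) := by
    have h1 : #(⋃ x : A, Fs c x.1) ≤ #A * ⨆ x : A, #(Fs c x.1) :=
      Cardinal.mk_iUnion_le _
    have h2 : (⨆ x : A, #(Fs c x.1)) ≤ (ℵ₀ : Cardinal.{u+1}) := by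
      rcases isEmpty_or_nonempty A with hE | hNE
      · simp [ciSup_of_empty]
      · exact ciSup_le fun x => Cardinal.mk_le_aleph0_iff.2
          (Set.countable_coe_iff.2 (hFc x.1 (hAκ x.2)))
    have h3 : #U ≤ #A + #A * (ℵ₀ : Cardinal.{u+1}) := by
      refine (Cardinal.mk_union_le _ _).trans ?_
      exact add_le_add le_rfl (h1.trans (mul_le_mul_right h2 _))
    have h4 : #A + #A * (ℵ₀ : Cardinal.{u+1}) ≤
        Cardinal.lift.{u + 1, u} (Cardinal.aleph.{u} 1) := by
      rw [hmkA]
      calc Cardinal.lift.{u+1, u} (Cardinal.aleph.{u} 1) +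
            Cardinal.lift.{u+1, u} (Cardinal.aleph.{u} 1) * ℵ₀
          ≤ Cardinal.lift.{u+1, u} (Cardinal.aleph.{u} 1) +
            Cardinal.lift.{u+1, u} (Cardinal.aleph.{u} 1) *
              Cardinal.lift.{u+1, u} (Cardinal.aleph.{u} 1) :=
            add_le_add le_rfl (mul_le_mul_right haleph1 _)
        _ = Cardinal.lift.{u+1, u} (Cardinal.aleph.{u} 1) := by
            rw [Cardinal.mul_eq_self haleph1, Cardinal.add_eq_self haleph1]
    have h5 : #(Set.Iio kappa.{u}) = Cardinal.lift.{u + 1, u} (Cardinal.aleph.{u} 2) := by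
      rw [kappa, Ordinal.mk_Iio_ordinal, Cardinal.card_ord]
    rw [h5]
    exact (h3.trans h4).trans_lt
      (Cardinal.lift_lt.2 (Cardinal.aleph_lt_aleph.2 one_lt_two))
  have hex : ∃ y, y < kappa.{u} ∧ y ∉ U := by
    by_contra h
    push_neg at h
    have hsub : Set.Iio kappa.{u} ⊆ U := fun y hy => h y hy
    exact absurd (Cardinal.mk_le_mk_of_subset hsub) hmkU.not_ge
  obtain ⟨y, hyκ, hyU⟩ := hex
  have hyA : y ∉ A := fun h => hyU (Or.inl h)
  have hAF : A ⊆ Fs c y := by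
    intro x hxA
    have hxκ : x < kappa.{u} := hAκ hxA
    have hxy : x ≠ y := fun h => hyA (h ▸ hxA)
    rcases edge_mem c hsym hxκ hyκ hxy with h | h
    · exact absurd (Or.inr (Set.mem_iUnion.2 ⟨⟨x, hxA⟩, h⟩)) hyU
    · exact h
  have hAc : A.Countable := (hFc y hyκ).mono hAF
  have hle : #A ≤ (ℵ₀ : Cardinal.{u+1}) :=
    Cardinal.mk_le_aleph0_iff.2 (Set.countable_coe_iff.2 hAc)
  rw [hmkA] at hle
  exact absurd hle (Cardinal.aleph0_lt_lift.2 Cardinal.aleph0_lt_aleph_one).not_ge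

/-- If case 2 fails, there is a good set, hence a path. -/
lemma main_path (c : Ordinal.{u} → Ordinal.{u} → ℕ) (hsym : ∀ a b, c a b = c b a) :
    ∃ β : ℕ → Ordinal.{u}, Function.Injective β ∧
      (∀ n, β n < kappa.{u}) ∧ ∃ γ : ℕ, ∀ n : ℕ, c (β n) (β (n + 1)) = γ := by
  have hc := no_total_exit c hsym
  push_neg at hc
  obtain ⟨γ, x₀, hx₀κ, hx₀⟩ := hc
  set astar : Ordinal.{u} := (⨆ p : Set.Iio kappa.{u}, Bex c γ p.1) + 1 with hastar
  set V : Set Ordinal.{u} := W c γ astar with hV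
  have hVsub : V ⊆ Set.Iio kappa.{u} := fun x hx => (mem_W_iff.1 hx).1
  have hnoexit : ∀ x ∈ V, ∀ b, (Nb c γ x ∩ W c γ b).Infinite := by
    intro x hx b
    by_contra hb
    rw [Set.not_infinite] at hb
    have hxκ : x < kappa.{u} := hVsub hx
    have hBmem : (Nb c γ x ∩ W c γ (Bex c γ x)).Finite := Bex_mem ⟨b, hb⟩
    have hle : Bex c γ x + 1 ≤ astar := by
      rw [hastar]
      exact add_le_add_left
        (Ordinal.le_iSup (fun p : Set.Iio kappa.{u} => Bex c γ p.1) ⟨x, hxκ⟩) 1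
    have hxW : x ∈ W c γ (Bex c γ x + 1) := W_anti hle hx
    have hinf := (mem_W_iff.1 hxW).2 (Bex c γ x) (by
      rw [Ordinal.add_one_eq_succ]; exact Order.lt_succ _)
    exact hinf hBmem
  have hgood : ∀ x ∈ V, (Nb c γ x ∩ V).Infinite := fun x hx => hnoexit x hx astar
  have hx₀V : x₀ ∈ V := mem_W_iff.2 ⟨hx₀κ, fun b _ => by
    by_contra hbad
    rw [Set.not_infinite] at hbad
    have : b ∈ exitSet c γ x₀ := hbad
    rw [hx₀] at this
    exact Set.notMem_empty b this⟩
  obtain ⟨β, h1, h2, h3⟩ := exists_path ⟨x₀, hx₀V⟩ hgood hVsub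
  exact ⟨β, h1, h2, γ, h3⟩

end
end PathRel

/-- `ω₂ →_path (ω)²_ω`: for every coloring `c` of the unordered pairs of ordinals
below `ℵ₂` (represented as a symmetric function) with countably many colors, there
is a sequence of pairwise distinct ordinals below `ℵ₂` which forms a monochromatic
path: all consecutive pairs get the same color `γ`. -/
theorem omega2_path_relation (c : Ordinal → Ordinal → ℕ)
    (hsym : ∀ a b, c a b = c b a) :
    ∃ β : ℕ → Ordinal, Function.Injective β ∧
      (∀ n, β n < (Cardinal.aleph 2).ord) ∧
      ∃ γ : ℕ, ∀ n : ℕ, c (β n) (β (n + 1)) = γ :=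
  PathRel.main_path c hsym
end

section
/- There exists a coloring c : [ω₁]² → ω such that for every finite set {α_0, …, α_m} ⊆ ω₁ and every v ⊆ {0, …, m} for which the subsequence (α_ℓ : ℓ ∈ v) is strictly increasing, one has |v| < max{c{α_ℓ, α_{ℓ+1}} : ℓ < m}. -/
open Cardinal

namespace Omega1Coloring

noncomputable section

def ω1 : Ordinal := (Cardinal.aleph 1).ord

/-- The invariants of the coherent family at a point `β`. -/
def InvAt (f : Ordinal → ℕ → Finset Ordinal) (β : Ordinal) : Prop :=
  (∀ n, f β n ⊆ f β (n + 1)) ∧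
  (∀ n x, x ∈ f β n → x < β) ∧
  (∀ n x, x ∈ f β n → f x n = (f β n).filter (· < x)) ∧
  (∀ n, (f β n).card ≤ n) ∧
  (∀ k : ℕ, ∃ N : ℕ, ∀ n, N ≤ n → (f β n).card + k ≤ n) ∧
  (β < ω1 → ∀ α, α < β → ∃ n, α ∈ f β n)

/-- `A` is an acceptable value at `β` relative to the family `f` used below `β`. -/
def StepOK (f : Ordinal → ℕ → Finset Ordinal) (β : Ordinal) (A : ℕ → Finset Ordinal) : Prop :=
  (∀ n, A n ⊆ A (n + 1)) ∧
  (∀ n x, x ∈ A n → x < β) ∧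
  (∀ n x, x ∈ A n → f x n = (A n).filter (· < x)) ∧
  (∀ n, (A n).card ≤ n) ∧
  (∀ k : ℕ, ∃ N : ℕ, ∀ n, N ≤ n → (A n).card + k ≤ n) ∧
  (β < ω1 → ∀ α, α < β → ∃ n, α ∈ A n)

def iterSeq {α : Type*} (s : α) (F : ℕ → α → α) : ℕ → α
  | 0 => s
  | k + 1 => F k (iterSeq s F k)

theorem subset_of_le {g : ℕ → Finset Ordinal} (hmono : ∀ n, g n ⊆ g (n + 1)) :
    ∀ {n n' : ℕ}, n ≤ n' → g n ⊆ g n' := by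
  intro n n' h
  induction n' with
  | zero => cases Nat.le_zero.1 h; exact Finset.Subset.refl _
  | succ k ihk =>
    rcases Nat.lt_or_ge n (k + 1) with h' | h'
    · exact (ihk (Nat.lt_succ_iff.1 h')).trans (hmono k)
    · have : n = k + 1 := le_antisymm h h'
      subst this; exact Finset.Subset.refl _

theorem step_exists (f : Ordinal → ℕ → Finset Ordinal) (β : Ordinal)
    (ih : ∀ γ, γ < β → InvAt f γ) : ∃ A, StepOK f β A := by
  classical
  by_cases hβ : 0 < β ∧ β < ω1
  case neg =>
    refine ⟨fun _ => ∅, ?_, ?_, ?_, ?_, ?_, ?_⟩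
    · intro n; exact Finset.Subset.refl _
    · intro n x hx; exact absurd hx (Finset.notMem_empty x)
    · intro n x hx; exact absurd hx (Finset.notMem_empty x)
    · intro n; simp
    · intro k; exact ⟨k, fun n hn => by simpa using hn⟩
    · intro h1 α hα
      exfalso
      have hb0 : β = 0 := by
        by_contra h0
        exact hβ ⟨pos_iff_ne_zero.2 h0, h1⟩
      rw [hb0] at hα
      exact absurd hα (not_lt_zero (a := α))
  case pos =>
  obtain ⟨hβ0, hβ1⟩ := hβ
  have imono : ∀ γ, γ < β → ∀ {n n' : ℕ}, n ≤ n' → f γ n ⊆ f γ n' :=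
    fun γ hγ => subset_of_le (ih γ hγ).1
  have ibound : ∀ γ, γ < β → ∀ n x, x ∈ f γ n → x < γ := fun γ hγ => (ih γ hγ).2.1
  have icoh : ∀ γ, γ < β → ∀ n x, x ∈ f γ n → f x n = (f γ n).filter (· < x) :=
    fun γ hγ => (ih γ hγ).2.2.1
  -- countable surjection onto Iio β
  have hcnt : (Set.Iio β).Countable := by
    rw [Cardinal.countable_iff_lt_aleph_one, Ordinal.mk_Iio_ordinal, Cardinal.lift_lt_aleph_one]
    exact Cardinal.lt_ord.1 hβ1
  obtain ⟨σ, hσr⟩ := hcnt.exists_eq_range ⟨0, hβ0⟩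
  have hσlt : ∀ k, σ k < β := by
    intro k
    have h : σ k ∈ Set.Iio β := by rw [hσr]; exact ⟨k, rfl⟩
    exact h
  have hσall : ∀ γ, γ < β → ∃ k, σ k = γ := by
    intro γ hγ
    have h : γ ∈ Set.range σ := by rw [← hσr]; exact hγ
    exact h
  -- running maxima
  let ξ : ℕ → Ordinal := iterSeq (σ 0) (fun k xk => max xk (σ (k + 1)))
  have hξ0 : ξ 0 = σ 0 := rfl
  have hξs : ∀ k, ξ (k + 1) = max (ξ k) (σ (k + 1)) := fun k => rfl
  have hξβ : ∀ k, ξ k < β := by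
    intro k; induction k with
    | zero => exact hσlt 0
    | succ k ihk => rw [hξs]; exact max_lt ihk (hσlt (k + 1))
  have hξmono : ∀ k, ξ k ≤ ξ (k + 1) := fun k => by rw [hξs]; exact le_max_left _ _
  have hξle : ∀ {j k : ℕ}, j ≤ k → ξ j ≤ ξ k := by
    intro j k h
    induction k with
    | zero => cases Nat.le_zero.1 h; exact le_rfl
    | succ k ihk =>
      rcases Nat.lt_or_ge j (k + 1) with h' | h'
      · exact (ihk (Nat.lt_succ_iff.1 h')).trans (hξmono k)
      · have hjk : j = k + 1 := le_antisymm h h'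
        subst hjk; exact le_rfl
  have hσξ : ∀ {j k : ℕ}, j ≤ k → σ j ≤ ξ k := by
    intro j k h
    refine le_trans ?_ (hξle h)
    cases j with
    | zero => exact le_of_eq hξ0.symm
    | succ j => rw [hξs]; exact le_max_right _ _
  -- covering values
  let nc : Ordinal → Ordinal → ℕ := fun x γ =>
    if h : ∃ n, x ∈ f γ n then Nat.find h else 0
  have hnc : ∀ x γ, x < γ → γ < β → x ∈ f γ (nc x γ) := by
    intro x γ hxγ hγβ
    have hex : ∃ n, x ∈ f γ n := (ih γ hγβ).2.2.2.2.2 (hγβ.trans hβ1) x hxγ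
    simp only [nc, dif_pos hex]
    exact Nat.find_spec hex
  -- slack thresholds
  let Ns : Ordinal → ℕ → ℕ := fun γ k =>
    if h : ∃ N : ℕ, ∀ n, N ≤ n → (f γ n).card + k ≤ n then Nat.find h else 0
  have hNs : ∀ γ, γ < β → ∀ k n, Ns γ k ≤ n → (f γ n).card + k ≤ n := by
    intro γ hγ k n hn
    have hex : ∃ N : ℕ, ∀ n, N ≤ n → (f γ n).card + k ≤ n := (ih γ hγ).2.2.2.2.1 k
    have hsp := Nat.find_spec hex
    simp only [Ns, dif_pos hex] at hn
    exact hsp n hn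
  -- the level sequence M
  let M : ℕ → ℕ := iterSeq (Ns (ξ 0) 1)
    (fun k Mk => 1 + max Mk (max (Ns (ξ (k + 1)) (k + 2))
      (max (nc (ξ k) (ξ (k + 1)))
        ((Finset.range (k + 1)).sup fun j => nc (σ j) (ξ k)))))
  have hMs : ∀ k, M (k + 1) = 1 + max (M k) (max (Ns (ξ (k + 1)) (k + 2))
      (max (nc (ξ k) (ξ (k + 1)))
        ((Finset.range (k + 1)).sup fun j => nc (σ j) (ξ k)))) :=
    fun k => rfl
  have hMlt : ∀ k, M k < M (k + 1) := by
    intro k; rw [hMs]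
    have h := le_max_left (M k) (max (Ns (ξ (k + 1)) (k + 2))
      (max (nc (ξ k) (ξ (k + 1)))
        ((Finset.range (k + 1)).sup fun j => nc (σ j) (ξ k))))
    omega
  have hMmono : ∀ {j k : ℕ}, j ≤ k → M j ≤ M k := by
    intro j k h
    induction k with
    | zero => cases Nat.le_zero.1 h; exact le_rfl
    | succ k ihk =>
      rcases Nat.lt_or_ge j (k + 1) with h' | h'
      · exact (ihk (Nat.lt_succ_iff.1 h')).trans (le_of_lt (hMlt k))
      · have hjk : j = k + 1 := le_antisymm h h'
        subst hjk; exact le_rfl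
  have hMk : ∀ k, k ≤ M k := by
    intro k; induction k with
    | zero => exact Nat.zero_le _
    | succ k ihk => have := hMlt k; omega
  have hMNs : ∀ k, Ns (ξ k) (k + 1) ≤ M k := by
    intro k; cases k with
    | zero => exact le_rfl
    | succ k =>
      show Ns (ξ (k + 1)) (k + 2) ≤ M (k + 1)
      rw [hMs]
      have h1 := le_max_left (Ns (ξ (k + 1)) (k + 2))
        (max (nc (ξ k) (ξ (k + 1)))
          ((Finset.range (k + 1)).sup fun j => nc (σ j) (ξ k)))
      have h2 := le_max_right (M k) (max (Ns (ξ (k + 1)) (k + 2))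
        (max (nc (ξ k) (ξ (k + 1)))
          ((Finset.range (k + 1)).sup fun j => nc (σ j) (ξ k))))
      omega
  -- band index
  let b : ℕ → ℕ := fun m => Nat.findGreatest (fun k => M k ≤ m) m
  have hb1 : ∀ m, M 0 ≤ m → M (b m) ≤ m := fun m hm =>
    Nat.findGreatest_spec (P := fun k => M k ≤ m) (Nat.zero_le m) hm
  have hb2 : ∀ m, m < M (b m + 1) := by
    intro m
    rcases Nat.lt_or_ge m (b m + 1) with h | h
    · exact lt_of_lt_of_le h (hMk _)
    · by_contra hcon
      push_neg at hcon
      exact Nat.findGreatest_is_greatest (P := fun k => M k ≤ m)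
        (Nat.lt_succ_self (b m)) h hcon
  have hbge : ∀ m k, M k ≤ m → k ≤ b m := fun m k h =>
    Nat.le_findGreatest (P := fun k => M k ≤ m) ((hMk k).trans h) h
  have hcardband : ∀ m, M 0 ≤ m → (f (ξ (b m)) m).card + (b m + 1) ≤ m := fun m hm =>
    hNs (ξ (b m)) (hξβ _) (b m + 1) m ((hMNs (b m)).trans (hb1 m hm))
  -- the candidate
  set A : ℕ → Finset Ordinal :=
    fun m => if M 0 ≤ m then insert (ξ (b m)) (f (ξ (b m)) m) else ∅ with hA
  have hApos : ∀ m, M 0 ≤ m → A m = insert (ξ (b m)) (f (ξ (b m)) m) := by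
    intro m hm; rw [hA]; simp only [if_pos hm]
  have hAneg : ∀ m, ¬ M 0 ≤ m → A m = ∅ := by
    intro m hm; rw [hA]; simp only [if_neg hm]
  refine ⟨A, ?_, ?_, ?_, ?_, ?_, ?_⟩
  -- (1) monotone
  · intro m
    by_cases h1 : M 0 ≤ m
    · have h2 : M 0 ≤ m + 1 := h1.trans (Nat.le_succ m)
      rw [hApos m h1, hApos (m + 1) h2]
      have hbm : b m ≤ b (m + 1) := hbge (m + 1) (b m) ((hb1 m h1).trans (Nat.le_succ m))
      have hbm2 : b (m + 1) ≤ b m + 1 := by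
        by_contra hcon
        push_neg at hcon
        have h3 := hMmono (show b m + 2 ≤ b (m + 1) from hcon)
        have h4 := hb1 (m + 1) h2
        have h5 := hb2 m
        have h6 : M (b m + 1) < M (b m + 2) := hMlt (b m + 1)
        omega
      have hcases : b (m + 1) = b m ∨ b (m + 1) = b m + 1 := by omega
      rcases hcases with he | he
      · rw [he]
        exact Finset.insert_subset_insert _ (imono _ (hξβ _) (Nat.le_succ m))
      · rw [he]
        have hMk1 : M (b m + 1) ≤ m + 1 := by rw [← he]; exact hb1 (m + 1) h2
        rcases eq_or_lt_of_le (hξmono (b m)) with hxe | hxl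
        · rw [← hxe]
          exact Finset.insert_subset_insert _ (imono _ (hξβ _) (Nat.le_succ m))
        · have hcross : nc (ξ (b m)) (ξ (b m + 1)) < M (b m + 1) := by
            rw [hMs]
            have h8 := le_max_left (nc (ξ (b m)) (ξ (b m + 1)))
              ((Finset.range (b m + 1)).sup fun j => nc (σ j) (ξ (b m)))
            have h9 := le_max_right (Ns (ξ (b m + 1)) (b m + 2))
              (max (nc (ξ (b m)) (ξ (b m + 1)))
                ((Finset.range (b m + 1)).sup fun j => nc (σ j) (ξ (b m))))
            have h10 := le_max_right (M (b m)) (max (Ns (ξ (b m + 1)) (b m + 2))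
              (max (nc (ξ (b m)) (ξ (b m + 1)))
                ((Finset.range (b m + 1)).sup fun j => nc (σ j) (ξ (b m)))))
            omega
          have hmem : ξ (b m) ∈ f (ξ (b m + 1)) (m + 1) :=
            imono _ (hξβ _) (show nc (ξ (b m)) (ξ (b m + 1)) ≤ m + 1 by omega)
              (hnc _ _ hxl (hξβ _))
          intro z hz
          rcases Finset.mem_insert.1 hz with rfl | hz'
          · exact Finset.mem_insert_of_mem hmem
          · have hz2 : z ∈ f (ξ (b m)) (m + 1) := imono _ (hξβ _) (Nat.le_succ m) hz'
            have hcoh2 := icoh _ (hξβ (b m + 1)) (m + 1) _ hmem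
            rw [hcoh2] at hz2
            exact Finset.mem_insert_of_mem (Finset.mem_filter.1 hz2).1
    · rw [hAneg m h1]; exact Finset.empty_subset _
  -- (2) bounds
  · intro n x hx
    by_cases h1 : M 0 ≤ n
    · rw [hApos n h1] at hx
      rcases Finset.mem_insert.1 hx with rfl | hx'
      · exact hξβ _
      · exact lt_trans (ibound _ (hξβ _) _ _ hx') (hξβ _)
    · rw [hAneg n h1] at hx
      exact absurd hx (Finset.notMem_empty x)
  -- (3) coherence
  · intro n x hx
    by_cases h1 : M 0 ≤ n
    · rw [hApos n h1] at hx ⊢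
      rcases Finset.mem_insert.1 hx with rfl | hx'
      · ext z
        simp only [Finset.mem_filter, Finset.mem_insert]
        constructor
        · intro hz; exact ⟨Or.inr hz, ibound _ (hξβ _) _ _ hz⟩
        · rintro ⟨hor, hlt⟩
          rcases hor with rfl | hz
          · exact absurd hlt (lt_irrefl _)
          · exact hz
      · have hcoh2 := icoh _ (hξβ (b n)) n x hx'
        rw [hcoh2]
        have hxξ : x < ξ (b n) := ibound _ (hξβ _) _ _ hx'
        ext z
        simp only [Finset.mem_filter, Finset.mem_insert]
        constructor
        · rintro ⟨hz, h2⟩; exact ⟨Or.inr hz, h2⟩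
        · rintro ⟨hor, h2⟩
          rcases hor with rfl | hz
          · exact absurd (h2.trans hxξ) (lt_irrefl _)
          · exact ⟨hz, h2⟩
    · rw [hAneg n h1] at hx
      exact absurd hx (Finset.notMem_empty x)
  -- (4) card
  · intro n
    by_cases h1 : M 0 ≤ n
    · rw [hApos n h1]
      have h2 := Finset.card_insert_le (ξ (b n)) (f (ξ (b n)) n)
      have h3 := hcardband n h1
      omega
    · rw [hAneg n h1]; simp
  -- (5) slack
  · intro k
    refine ⟨M k, fun n hn => ?_⟩
    have h1 : M 0 ≤ n := (hMmono (Nat.zero_le k)).trans hn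
    rw [hApos n h1]
    have hbk : k ≤ b n := hbge n k hn
    have h2 := hcardband n h1
    have h3 := Finset.card_insert_le (ξ (b n)) (f (ξ (b n)) n)
    omega
  -- (6) covering
  · intro _ α hα
    obtain ⟨j, rfl⟩ := hσall α hα
    by_cases hcase : ∃ k, j ≤ k ∧ σ j < ξ k
    · obtain ⟨k, hjk, hlt⟩ := hcase
      refine ⟨max (M k) (nc (σ j) (ξ k)), ?_⟩
      have hm0 : M 0 ≤ max (M k) (nc (σ j) (ξ k)) :=
        le_trans (hMmono (Nat.zero_le k)) (le_max_left _ _)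
      have hsup : nc (σ j) (ξ k)
          ≤ (Finset.range (k + 1)).sup fun j' => nc (σ j') (ξ k) := by
        have hmem : j ∈ Finset.range (k + 1) := Finset.mem_range.2 (Nat.lt_succ_of_le hjk)
        exact Finset.le_sup (f := fun j' => nc (σ j') (ξ k)) hmem
      have hmlt : max (M k) (nc (σ j) (ξ k)) < M (k + 1) := by
        refine max_lt (hMlt k) ?_
        rw [hMs]
        have h8 := le_max_right (nc (ξ k) (ξ (k + 1)))
          ((Finset.range (k + 1)).sup fun j' => nc (σ j') (ξ k))
        have h9 := le_max_right (Ns (ξ (k + 1)) (k + 2))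
          (max (nc (ξ k) (ξ (k + 1)))
            ((Finset.range (k + 1)).sup fun j' => nc (σ j') (ξ k)))
        have h10 := le_max_right (M k) (max (Ns (ξ (k + 1)) (k + 2))
          (max (nc (ξ k) (ξ (k + 1)))
            ((Finset.range (k + 1)).sup fun j' => nc (σ j') (ξ k))))
        omega
      have hbm : b (max (M k) (nc (σ j) (ξ k))) = k := by
        refine le_antisymm ?_ (hbge _ k (le_max_left _ _))
        by_contra hcon
        push_neg at hcon
        have h3 := hMmono (show k + 1 ≤ b (max (M k) (nc (σ j) (ξ k))) from hcon)
        have h4 := hb1 _ hm0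
        omega
      rw [hApos _ hm0, hbm]
      exact Finset.mem_insert_of_mem
        (imono _ (hξβ k) (le_max_right _ _) (hnc (σ j) (ξ k) hlt (hξβ k)))
    · push_neg at hcase
      refine ⟨M j, ?_⟩
      have hm0 : M 0 ≤ M j := hMmono (Nat.zero_le j)
      rw [hApos _ hm0]
      have hbj : j ≤ b (M j) := hbge (M j) j le_rfl
      have hxe : ξ (b (M j)) = σ j := le_antisymm (hcase _ hbj) (hσξ hbj)
      rw [hxe]
      exact Finset.mem_insert_self _ _

/-- The coherent family, by transfinite recursion with choice. -/
def D : Ordinal → ℕ → Finset Ordinal :=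
  Ordinal.lt_wf.fix fun β rec =>
    Classical.epsilon (StepOK (fun γ => if h : γ < β then rec γ h else fun _ => ∅) β)

theorem D_eq (β : Ordinal) :
    D β = Classical.epsilon (StepOK (fun γ => if h : γ < β then D γ else fun _ => ∅) β) := by
  unfold D
  exact Ordinal.lt_wf.fix_eq _ β

theorem D_invAt : ∀ β, InvAt D β := by
  intro β
  induction β using Ordinal.induction with
  | h β ih =>
    set g : Ordinal → ℕ → Finset Ordinal :=
      fun γ => if h : γ < β then D γ else fun _ => ∅ with hg
    have hgeq : ∀ γ, γ < β → g γ = D γ := by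
      intro γ h; rw [hg]; simp only [dif_pos h]
    have ihg : ∀ γ, γ < β → InvAt g γ := by
      intro γ hγ
      obtain ⟨i1, i2, i3, i4, i5, i6⟩ := ih γ hγ
      rw [InvAt, hgeq γ hγ]
      refine ⟨i1, i2, ?_, i4, i5, i6⟩
      intro n x hx
      have hxγ : x < γ := i2 n x hx
      rw [hgeq x (hxγ.trans hγ)]
      exact i3 n x hx
    have hspec := Classical.epsilon_spec (step_exists g β ihg)
    rw [← D_eq β] at hspec
    obtain ⟨s1, s2, s3, s4, s5, s6⟩ := hspec
    refine ⟨s1, s2, ?_, s4, s5, s6⟩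
    intro n x hx
    have hxβ : x < β := s2 n x hx
    have h3 := s3 n x hx
    rwa [hgeq x hxβ] at h3

theorem D_mono {β : Ordinal} {n n' : ℕ} (h : n ≤ n') : D β n ⊆ D β n' :=
  subset_of_le (D_invAt β).1 h

theorem D_lt {β : Ordinal} {n : ℕ} {x : Ordinal} (h : x ∈ D β n) : x < β :=
  (D_invAt β).2.1 n x h

theorem D_coh {β : Ordinal} {n : ℕ} {x : Ordinal} (h : x ∈ D β n) :
    D x n = (D β n).filter (· < x) :=
  (D_invAt β).2.2.1 n x h

theorem D_card (β : Ordinal) (n : ℕ) : (D β n).card ≤ n :=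
  (D_invAt β).2.2.2.1 n

theorem D_cov {β : Ordinal} (hβ : β < ω1) {α : Ordinal} (h : α < β) : ∃ n, α ∈ D β n :=
  (D_invAt β).2.2.2.2.2 hβ α h

theorem Ahat_filter {x y : Ordinal} {n : ℕ} (h : x ∈ D y n) :
    insert x (D x n) = (insert y (D y n)).filter (· ≤ x) := by
  have hxy : x < y := D_lt h
  have hco := D_coh h
  ext z
  constructor
  · intro hz
    rcases Finset.mem_insert.1 hz with rfl | hz
    · exact Finset.mem_filter.2 ⟨Finset.mem_insert_of_mem h, le_rfl⟩
    · rw [hco, Finset.mem_filter] at hz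
      exact Finset.mem_filter.2 ⟨Finset.mem_insert_of_mem hz.1, le_of_lt hz.2⟩
  · intro hz
    rw [Finset.mem_filter] at hz
    obtain ⟨hz1, hz2⟩ := hz
    rcases Finset.mem_insert.1 hz1 with rfl | hz1
    · exact absurd hz2 (not_le.2 hxy)
    · rcases eq_or_lt_of_le hz2 with rfl | hlt
      · exact Finset.mem_insert_self _ _
      · refine Finset.mem_insert_of_mem ?_
        rw [hco, Finset.mem_filter]
        exact ⟨hz1, hlt⟩

theorem Ahat_subset {x y : Ordinal} {n : ℕ} (h : x ∈ D y n) :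
    insert x (D x n) ⊆ insert y (D y n) := by
  rw [Ahat_filter h]; exact Finset.filter_subset _ _

theorem Ahat_initial {u w : Ordinal} {n : ℕ} (h : insert u (D u n) ⊆ insert w (D w n)) :
    insert u (D u n) = (insert w (D w n)).filter (· ≤ u) := by
  have hu : u ∈ insert w (D w n) := h (Finset.mem_insert_self u _)
  rcases Finset.mem_insert.1 hu with rfl | hmem
  · ext z
    rw [Finset.mem_filter]
    constructor
    · intro hz
      refine ⟨hz, ?_⟩
      rcases Finset.mem_insert.1 hz with rfl | hz
      · exact le_rfl
      · exact le_of_lt (D_lt hz)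
    · exact fun hz => hz.1
  · exact Ahat_filter hmem

theorem filter_le_mono {S : Finset Ordinal} {u v : Ordinal} (h : u ≤ v) :
    S.filter (· ≤ u) ⊆ S.filter (· ≤ v) := by
  intro z hz
  rw [Finset.mem_filter] at hz ⊢
  exact ⟨hz.1, hz.2.trans h⟩

theorem not_lower {n : ℕ} {x y : Ordinal} (hxy : x ≠ y)
    (hsub : insert x (D x n) ⊆ insert y (D y n)) : (D x n).card < (D y n).card := by
  have hmem : x ∈ insert y (D y n) := hsub (Finset.mem_insert_self _ _)
  have hmem2 : x ∈ D y n := by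
    rcases Finset.mem_insert.1 hmem with heq | h2
    · exact absurd heq hxy
    · exact h2
  have hss : D x n ⊂ D y n := by
    rw [D_coh hmem2]
    exact Finset.filter_ssubset.2 ⟨x, hmem2, lt_irrefl _⟩
  exact Finset.card_lt_card hss

theorem min_contained (n : ℕ) (P : ℕ → Ordinal) (a b i₀ : ℕ)
    (ha : a ≤ i₀) (hb : i₀ ≤ b)
    (hinj : ∀ i j, a ≤ i → i ≤ b → a ≤ j → j ≤ b → i ≠ j → P i ≠ P j)
    (hedge : ∀ i, a ≤ i → i < b → (P i ∈ D (P (i + 1)) n ∨ P (i + 1) ∈ D (P i) n))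
    (hmin : ∀ i, a ≤ i → i ≤ b → (D (P i₀) n).card ≤ (D (P i) n).card) :
    ∀ t, i₀ + t ≤ b →
      insert (P i₀) (D (P i₀) n) ⊆ insert (P (i₀ + t)) (D (P (i₀ + t)) n) := by
  intro t
  induction t with
  | zero => intro _; exact Finset.Subset.refl _
  | succ t iht =>
    intro hle
    have hle' : i₀ + t ≤ b := by omega
    have hsub := iht hle'
    set j := i₀ + t with hj
    show insert (P i₀) (D (P i₀) n) ⊆ insert (P (j + 1)) (D (P (j + 1)) n)
    have hedgej := hedge j (by omega) (by omega)
    rcases hedgej with he | he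
    · exact hsub.trans (Ahat_subset he)
    · have hf1 := Ahat_filter he
      have hf2 := Ahat_initial hsub
      rcases le_total (P i₀) (P (j + 1)) with hc | hc
      · rw [hf2, hf1]
        exact filter_le_mono hc
      · exfalso
        have hsub2 : insert (P (j + 1)) (D (P (j + 1)) n) ⊆ insert (P i₀) (D (P i₀) n) := by
          rw [hf2, hf1]
          exact filter_le_mono hc
        have hne : P (j + 1) ≠ P i₀ :=
          hinj (j + 1) i₀ (by omega) (by omega) (by omega) (by omega) (by omega)
        have hlt := not_lower hne hsub2
        have hm := hmin (j + 1) (by omega) (by omega)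
        omega

theorem min_contained_down (n : ℕ) (P : ℕ → Ordinal) (a b i₀ : ℕ)
    (ha : a ≤ i₀) (hb : i₀ ≤ b)
    (hinj : ∀ i j, a ≤ i → i ≤ b → a ≤ j → j ≤ b → i ≠ j → P i ≠ P j)
    (hedge : ∀ i, a ≤ i → i < b → (P i ∈ D (P (i + 1)) n ∨ P (i + 1) ∈ D (P i) n))
    (hmin : ∀ i, a ≤ i → i ≤ b → (D (P i₀) n).card ≤ (D (P i) n).card) :
    ∀ t, t ≤ i₀ - a →
      insert (P i₀) (D (P i₀) n) ⊆ insert (P (i₀ - t)) (D (P (i₀ - t)) n) := by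
  intro t
  induction t with
  | zero => intro _; exact Finset.Subset.refl _
  | succ t iht =>
    intro hle
    have hle' : t ≤ i₀ - a := by omega
    have hsub := iht hle'
    set j := i₀ - (t + 1) with hj
    have hjj : j + 1 = i₀ - t := by omega
    show insert (P i₀) (D (P i₀) n) ⊆ insert (P j) (D (P j) n)
    have hedgej := hedge j (by omega) (by omega)
    rw [hjj] at hedgej
    rcases hedgej with he | he
    · have hf1 := Ahat_filter he
      have hf2 := Ahat_initial hsub
      rcases le_total (P i₀) (P j) with hc | hc
      · rw [hf2, hf1]
        exact filter_le_mono hc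
      · exfalso
        have hsub2 : insert (P j) (D (P j) n) ⊆ insert (P i₀) (D (P i₀) n) := by
          rw [hf2, hf1]
          exact filter_le_mono hc
        have hne : P j ≠ P i₀ :=
          hinj j i₀ (by omega) (by omega) (by omega) (by omega) (by omega)
        have hlt := not_lower hne hsub2
        have hm := hmin j (by omega) (by omega)
        omega
    · exact hsub.trans (Ahat_subset he)

theorem path_bound (n : ℕ) :
    ∀ d q : ℕ, q + d = n + 1 →
    ∀ (P : ℕ → Ordinal) (a b : ℕ), a ≤ b →
    (∀ i j, a ≤ i → i ≤ b → a ≤ j → j ≤ b → i ≠ j → P i ≠ P j) →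
    (∀ i, a ≤ i → i < b → (P i ∈ D (P (i + 1)) n ∨ P (i + 1) ∈ D (P i) n)) →
    (∀ i, a ≤ i → i ≤ b → q ≤ (D (P i) n).card) →
    b + 1 - a ≤ 2 ^ d - 1 := by
  intro d
  induction d with
  | zero =>
    intro q hq P a b hab hinj hedge hcard
    have h1 := hcard a le_rfl hab
    have h2 := D_card (P a) n
    omega
  | succ d IH =>
    intro q hq P a b hab hinj hedge hcard
    obtain ⟨i₀, hi₀mem, hi₀min⟩ := Finset.exists_min_image (Finset.Icc a b)
      (fun i => (D (P i) n).card) ⟨a, Finset.mem_Icc.2 ⟨le_rfl, hab⟩⟩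
    rw [Finset.mem_Icc] at hi₀mem
    obtain ⟨hai₀, hi₀b⟩ := hi₀mem
    have hmin : ∀ i, a ≤ i → i ≤ b → (D (P i₀) n).card ≤ (D (P i) n).card :=
      fun i h1 h2 => hi₀min i (Finset.mem_Icc.2 ⟨h1, h2⟩)
    have hcont : ∀ i, a ≤ i → i ≤ b →
        insert (P i₀) (D (P i₀) n) ⊆ insert (P i) (D (P i) n) := by
      intro i h1 h2
      rcases le_total i₀ i with hc | hc
      · have h3 := min_contained n P a b i₀ hai₀ hi₀b hinj hedge hmin (i - i₀) (by omega)
        have heq : i₀ + (i - i₀) = i := by omega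
        rwa [heq] at h3
      · have h3 := min_contained_down n P a b i₀ hai₀ hi₀b hinj hedge hmin (i₀ - i) (by omega)
        have heq : i₀ - (i₀ - i) = i := by omega
        rwa [heq] at h3
    have hq1 : ∀ i, a ≤ i → i ≤ b → i ≠ i₀ → q + 1 ≤ (D (P i) n).card := by
      intro i h1 h2 h3
      have hne : P i₀ ≠ P i := hinj i₀ i hai₀ hi₀b h1 h2 (Ne.symm h3)
      have h4 := not_lower hne (hcont i h1 h2)
      have h5 := hcard i₀ hai₀ hi₀b
      omega
    have hleft : i₀ - a ≤ 2 ^ d - 1 := by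
      rcases Nat.eq_or_lt_of_le hai₀ with he | hlt
      · omega
      · have h6 := IH (q + 1) (by omega) P a (i₀ - 1) (by omega)
          (fun i j hi1 hi2 hj1 hj2 hij => hinj i j hi1 (by omega) hj1 (by omega) hij)
          (fun i hi1 hi2 => hedge i hi1 (by omega))
          (fun i hi1 hi2 => hq1 i hi1 (by omega) (by omega))
        omega
    have hright : b - i₀ ≤ 2 ^ d - 1 := by
      rcases Nat.eq_or_lt_of_le hi₀b with he | hlt
      · omega
      · have h6 := IH (q + 1) (by omega) P (i₀ + 1) b (by omega)
          (fun i j hi1 hi2 hj1 hj2 hij => hinj i j (by omega) hi2 (by omega) hj2 hij)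
          (fun i hi1 hi2 => hedge i (by omega) hi2)
          (fun i hi1 hi2 => hq1 i (by omega) hi2 (by omega))
        omega
    have hpow : 1 ≤ 2 ^ d := Nat.one_le_two_pow
    have hpow2 : 2 ^ (d + 1) = 2 * 2 ^ d := by rw [pow_succ]; ring
    omega

open Classical in
def EV (x y : Ordinal) : ℕ := if h : ∃ n, x ∈ D y n then Nat.find h else 0

open Classical in
theorem EV_mem {x y : Ordinal} (h : ∃ n, x ∈ D y n) : x ∈ D y (EV x y) := by
  rw [EV, dif_pos h]; exact Nat.find_spec h

/-- The coloring. -/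
def col (a b : Ordinal) : ℕ := 2 ^ (EV (min a b) (max a b) + 2)

theorem col_symm (a b : Ordinal) : col a b = col b a := by
  rw [col, col, min_comm, max_comm]

end

end Omega1Coloring

open Omega1Coloring in
/-- There is a coloring `c : [ω₁]² → ω` (a symmetric function on countable
ordinals) such that for every finite sequence `α_0, …, α_m` (`m ≥ 1`) of pairwise
distinct countable ordinals and every `v ⊆ {0, …, m}` along which the subsequence
`(α_ℓ : ℓ ∈ v)` is strictly increasing, the cardinality of `v` is strictly below
the maximum of the colors `c (α_ℓ) (α_{ℓ+1})` for `ℓ < m`, i.e. some consecutive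
pair receives a color exceeding `|v|`. -/
theorem exists_coloring_omega1_increasing_subsequence_bound :
    ∃ c : Ordinal → Ordinal → ℕ, (∀ a b, c a b = c b a) ∧
      ∀ m : ℕ, 0 < m → ∀ α : ℕ → Ordinal,
        (∀ ℓ ≤ m, α ℓ < (Cardinal.aleph 1).ord) →
        (∀ k ≤ m, ∀ ℓ ≤ m, k ≠ ℓ → α k ≠ α ℓ) →
        ∀ v : Finset ℕ, (∀ ℓ ∈ v, ℓ ≤ m) →
          (∀ k ∈ v, ∀ ℓ ∈ v, k < ℓ → α k < α ℓ) →
          ∃ ℓ < m, v.card < c (α ℓ) (α (ℓ + 1)) := by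
  refine ⟨col, col_symm, ?_⟩
  intro m hm α hα hinj v hv _
  obtain ⟨L, hLmem, hLmax⟩ := Finset.exists_max_image (Finset.range m)
    (fun ℓ => EV (min (α ℓ) (α (ℓ + 1))) (max (α ℓ) (α (ℓ + 1))))
    ⟨0, Finset.mem_range.2 hm⟩
  set nn := EV (min (α L) (α (L + 1))) (max (α L) (α (L + 1))) with hnn
  have hedge : ∀ ℓ, ℓ < m → (α ℓ ∈ D (α (ℓ + 1)) nn ∨ α (ℓ + 1) ∈ D (α ℓ) nn) := by
    intro ℓ hℓ
    have hℓ1 : ℓ + 1 ≤ m := hℓ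
    have hne : α ℓ ≠ α (ℓ + 1) := hinj ℓ (le_of_lt hℓ) (ℓ + 1) hℓ1 (by omega)
    have hmaxlt : max (α ℓ) (α (ℓ + 1)) < ω1 :=
      max_lt (hα ℓ (le_of_lt hℓ)) (hα (ℓ + 1) hℓ1)
    have hminmax : min (α ℓ) (α (ℓ + 1)) < max (α ℓ) (α (ℓ + 1)) := min_lt_max.2 hne
    have hex : ∃ k, min (α ℓ) (α (ℓ + 1)) ∈ D (max (α ℓ) (α (ℓ + 1))) k :=
      D_cov hmaxlt hminmax
    have h1 := EV_mem hex
    have h2 : min (α ℓ) (α (ℓ + 1)) ∈ D (max (α ℓ) (α (ℓ + 1))) nn :=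
      D_mono (hLmax ℓ (Finset.mem_range.2 hℓ)) h1
    rcases lt_or_gt_of_ne hne with hlt | hlt
    · left; rwa [min_eq_left hlt.le, max_eq_right hlt.le] at h2
    · right; rwa [min_eq_right hlt.le, max_eq_left hlt.le] at h2
  have hpath := path_bound nn (nn + 1) 0 (by omega) α 0 m (Nat.zero_le m)
    (fun i j _ hi _ hj hij => hinj i hi j hj hij)
    (fun i _ hi => hedge i hi)
    (fun i _ _ => Nat.zero_le _)
  refine ⟨L, Finset.mem_range.1 hLmem, ?_⟩
  have hvcard : v.card ≤ m + 1 := by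
    have hsub : v ⊆ Finset.range (m + 1) :=
      fun ℓ hℓ => Finset.mem_range.2 (Nat.lt_succ_of_le (hv ℓ hℓ))
    have := Finset.card_le_card hsub
    simpa using this
  have hcol : col (α L) (α (L + 1)) = 2 ^ (nn + 2) := rfl
  rw [hcol]
  have hp1 : 1 ≤ 2 ^ (nn + 1) := Nat.one_le_two_pow
  have hp2 : 2 ^ (nn + 2) = 2 * 2 ^ (nn + 1) := by rw [pow_succ]; ring
  omega
end

section
/- ω₁ ↛_path (ω)²_{ω,<ω}: there exists a coloring c : [ω₁]² → ω such that for every sequence (β_n : n ∈ ω) of pairwise distinct countable ordinals, the set {c{β_n, β_{n+1}} : n ∈ ω} is infinite. -/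
open Cardinal Set

noncomputable section

namespace PathNeg

attribute [local instance] Classical.propDecidable

universe u

abbrev Pr := (Ordinal.{u} → ℕ) × (ℕ → ℕ)

def junk : Pr := (fun _ => 0, fun M => M)

def Omega1 : Ordinal := (Cardinal.aleph 1).ord

/-- enumeration of the predecessors of `β` -/
def sfun (β : Ordinal) : ℕ → Ordinal :=
  if h : ∃ f : ℕ → Ordinal, Set.Iio β = Set.range f then h.choose else fun _ => 0

lemma sfun_spec {β : Ordinal.{u}} (h0 : 0 < β) (h1 : β < Omega1) :
    Set.Iio β = Set.range (sfun β) := by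
  have hc : (Set.Iio β).Countable := by
    rw [Cardinal.countable_iff_lt_aleph_one, Ordinal.mk_Iio_ordinal]
    have hcard : β.card < Cardinal.aleph 1 := Cardinal.lt_ord.mp h1
    calc Cardinal.lift.{u + 1} β.card < Cardinal.lift.{u + 1} (Cardinal.aleph 1) :=
          Cardinal.lift_lt.mpr hcard
      _ = Cardinal.aleph 1 := by
          rw [Cardinal.lift_aleph]
          norm_num
  obtain ⟨f, hf⟩ := hc.exists_eq_range ⟨0, h0⟩
  have hex : ∃ f : ℕ → Ordinal, Set.Iio β = Set.range f := ⟨f, hf⟩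
  rw [sfun, dif_pos hex]
  exact hex.choose_spec

section helpers

variable (G : Ordinal → Pr) (s : ℕ → Ordinal)

/-- color of the pair `s j`, `s i` according to `G` -/
def pc (j i : ℕ) : ℕ :=
  if s j < s i then (G (s i)).1 (s j) else if s i < s j then (G (s j)).1 (s i) else 0

/-- threshold beyond which the rank of `s k` is at least `k+1` -/
def nthr (k : ℕ) : ℕ :=
  if h : ∃ N, ∀ M, N ≤ M → k + 1 ≤ (G (s k)).2 M then Nat.find h else 0

def Bx (k : ℕ) : ℕ :=
  (Finset.range (k + 1)).sup fun j =>
    max (nthr G s j) ((Finset.range (k + 1)).sup fun i => pc G s j i)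

def Lx (k : ℕ) : ℕ := k + 1 + Bx G s k

lemma le_Lx (k : ℕ) : k + 1 ≤ Lx G s k := Nat.le_add_right _ _

lemma Bx_mono {j k : ℕ} (h : j ≤ k) : Bx G s j ≤ Bx G s k := by
  apply Finset.sup_le
  intro j' hj'
  have hj'k : j' ∈ Finset.range (k + 1) := by
    rw [Finset.mem_range] at *; omega
  refine le_trans ?_ (Finset.le_sup hj'k)
  exact max_le_max le_rfl (Finset.sup_mono (by
    apply Finset.range_subset_range.mpr; omega))

lemma Lx_mono {j k : ℕ} (h : j ≤ k) : Lx G s j ≤ Lx G s k := by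
  have := Bx_mono G s h; unfold Lx; omega

lemma nthr_le_Lx (k : ℕ) : nthr G s k ≤ Lx G s k := by
  have h1 : nthr G s k ≤ Bx G s k := by
    unfold Bx
    refine le_trans (le_max_left _ ((Finset.range (k + 1)).sup fun i => pc G s k i))
      (Finset.le_sup (f := fun j =>
        max (nthr G s j) ((Finset.range (k + 1)).sup fun i => pc G s j i)) ?_)
    simp
  unfold Lx; omega

lemma pc_le_Lx {a b m : ℕ} (ha : a ≤ m) (hb : b ≤ m) : pc G s a b ≤ Lx G s m := by
  have h1 : pc G s a b ≤ (Finset.range (m + 1)).sup fun i => pc G s a i :=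
    Finset.le_sup (by rw [Finset.mem_range]; omega)
  have h2 : ((Finset.range (m + 1)).sup fun i => pc G s a i) ≤ Bx G s m := by
    unfold Bx
    refine le_trans (le_max_right (nthr G s a) ((Finset.range (m + 1)).sup fun i => pc G s a i))
      (Finset.le_sup (f := fun j =>
        max (nthr G s j) ((Finset.range (m + 1)).sup fun i => pc G s j i)) ?_)
    rw [Finset.mem_range]; omega
  unfold Lx; omega

def colx : Ordinal → ℕ := fun α =>
  if h : ∃ n, s n = α then Lx G s (Nat.find h) else 0

def rkx (M : ℕ) : ℕ :=
  if hne : ((Finset.range (M + 1)).filter fun k => Lx G s k ≤ M).Nonempty then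
    (((Finset.range (M + 1)).filter fun k => Lx G s k ≤ M).inf' hne
      fun k => (G (s k)).2 M) - 1
  else M

end helpers

def F : Ordinal → Pr :=
  Ordinal.lt_wf.fix fun β IH =>
    (colx (fun α => if h : α < β then IH α h else junk) (sfun β),
     rkx (fun α => if h : α < β then IH α h else junk) (sfun β))

def Fg (β : Ordinal) (α : Ordinal) : Pr := if α < β then F α else junk

lemma F_eq (β : Ordinal) : F β = (colx (Fg β) (sfun β), rkx (Fg β) (sfun β)) := by
  have h1 : (fun α => if h : α < β then F α else junk) = Fg β := by
    funext α; rw [Fg]; exact dite_eq_ite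
  rw [show F β = (colx (fun α => if h : α < β then F α else junk) (sfun β),
      rkx (fun α => if h : α < β then F α else junk) (sfun β)) from
    WellFounded.fix_eq _ _ _, h1]

def I1 (β : Ordinal) : Prop :=
  ∀ x y, x < y → y < β → (F y).1 x ≤ max ((F β).1 x) ((F β).1 y)
def I2 (β : Ordinal) : Prop :=
  ∀ x, x < β → ∀ M, (F β).1 x ≤ M → (F β).2 M < (F x).2 M
def I3 (β : Ordinal) : Prop := ∀ T, ∃ N, ∀ M, N ≤ M → T ≤ (F β).2 M
def I4 (β : Ordinal) : Prop := ∀ M, {x | x < β ∧ (F β).1 x ≤ M}.Finite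
def Inv (β : Ordinal) : Prop := I1 β ∧ I2 β ∧ I3 β ∧ I4 β

lemma inv_all : ∀ β, β < Omega1 → Inv β := by
  intro β
  induction β using Ordinal.induction with
  | h β IH =>
    intro hβΩ
    by_cases h0 : β = 0
    · subst h0
      refine ⟨?_, ?_, ?_, ?_⟩
      · intro x y _ hy; exact absurd hy (zero_le (a := y)).not_gt
      · intro x hx; exact absurd hx (zero_le (a := x)).not_gt
      · -- I3 at 0
        intro T
        refine ⟨T + 1, fun M hM => ?_⟩
        have hrk : (F 0).2 M = rkx (Fg 0) (sfun 0) M := by rw [F_eq]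
        rw [hrk, rkx]
        by_cases hne : ((Finset.range (M + 1)).filter fun k => Lx (Fg 0) (sfun 0) k ≤ M).Nonempty
        · rw [dif_pos hne]
          have hval : ∀ k ∈ (Finset.range (M + 1)).filter fun k => Lx (Fg 0) (sfun 0) k ≤ M,
              M ≤ (Fg 0 (sfun 0 k)).2 M := by
            intro k _
            rw [Fg, if_neg (zero_le (a := sfun 0 k)).not_gt]
            exact le_rfl
          have := Finset.le_inf' hne _ hval
          omega
        · rw [dif_neg hne]; omega
      · intro M
        apply Set.Finite.subset Set.finite_empty
        rintro x ⟨hx, _⟩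
        exact absurd hx (zero_le (a := x)).not_gt
    · -- main case: 0 < β < Ω
      have h0' : 0 < β := pos_iff_ne_zero.mpr h0
      set s := sfun β with hsdef
      have hs : Set.Iio β = Set.range s := sfun_spec h0' hβΩ
      have hs1 : ∀ n, s n < β := by
        intro n
        have : s n ∈ Set.Iio β := by rw [hs]; exact ⟨n, rfl⟩
        exact this
      have hs2 : ∀ x, x < β → ∃ n, s n = x := by
        intro x hx
        have : x ∈ Set.range s := by rw [← hs]; exact hx
        exact this
      have hGF : ∀ n, Fg β (s n) = F (s n) := fun n => if_pos (hs1 n)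
      have hIH : ∀ n, Inv (s n) := fun n => IH (s n) (hs1 n) (lt_trans (hs1 n) hβΩ)
      -- color formula
      have hcol : ∀ x, x < β → ∃ k, s k = x ∧ (F β).1 x = Lx (Fg β) s k := by
        intro x hx
        have hex := hs2 x hx
        refine ⟨Nat.find hex, Nat.find_spec hex, ?_⟩
        have : (F β).1 x = colx (Fg β) s x := by rw [F_eq]
        rw [this, colx, dif_pos hex]
      have hrk : ∀ M, (F β).2 M = rkx (Fg β) s M := fun M => by rw [F_eq]
      -- nthr spec
      have hnthr : ∀ k M, nthr (Fg β) s k ≤ M → k + 1 ≤ (F (s k)).2 M := by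
        intro k M hM
        obtain ⟨N, hN⟩ := (hIH k).2.2.1 (k + 1)
        have hex : ∃ N, ∀ M', N ≤ M' → k + 1 ≤ (Fg β (s k)).2 M' :=
          ⟨N, fun M' h => by rw [hGF k]; exact hN M' h⟩
        rw [nthr, dif_pos hex] at hM
        have := Nat.find_spec hex M hM
        rwa [hGF k] at this
      have hval : ∀ M k, Lx (Fg β) s k ≤ M → k + 1 ≤ (F (s k)).2 M := by
        intro M k hk
        exact hnthr k M (le_trans (nthr_le_Lx (Fg β) s k) hk)
      refine ⟨?_, ?_, ?_, ?_⟩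
      · -- I1
        intro x y hxy hyβ
        obtain ⟨a, hsa, hax⟩ := hcol x (lt_trans hxy hyβ)
        obtain ⟨b, hsb, hby⟩ := hcol y hyβ
        have hpc : pc (Fg β) s a b = (F y).1 x := by
          rw [pc, hsa, hsb, if_pos hxy, Fg, if_pos hyβ]
        have h1 : pc (Fg β) s a b ≤ Lx (Fg β) s (max a b) :=
          pc_le_Lx _ _ (le_max_left a b) (le_max_right a b)
        have h2 : Lx (Fg β) s (max a b) ≤ max (Lx (Fg β) s a) (Lx (Fg β) s b) := by
          rcases le_total a b with h | h
          · rw [max_eq_right h]; exact le_max_right _ _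
          · rw [max_eq_left h]; exact le_max_left _ _
        rw [← hpc, hax, hby]
        exact le_trans h1 h2
      · -- I2
        intro x hx M hxM
        obtain ⟨a, hsa, hax⟩ := hcol x hx
        rw [hax] at hxM
        have haf : a ∈ (Finset.range (M + 1)).filter fun k => Lx (Fg β) s k ≤ M := by
          rw [Finset.mem_filter, Finset.mem_range]
          have := le_Lx (Fg β) s a
          exact ⟨by omega, hxM⟩
        have hne : ((Finset.range (M + 1)).filter fun k => Lx (Fg β) s k ≤ M).Nonempty :=
          ⟨a, haf⟩
        rw [hrk M, rkx, dif_pos hne]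
        have h1 := Finset.inf'_le (fun k => (Fg β (s k)).2 M) haf
        rw [hGF a, hsa] at h1
        have h2 : 1 ≤ ((Finset.range (M + 1)).filter fun k => Lx (Fg β) s k ≤ M).inf' hne
            fun k => (Fg β (s k)).2 M := by
          apply Finset.le_inf'
          intro k hk
          rw [Finset.mem_filter] at hk
          have := hval M k hk.2
          rw [hGF k]
          omega
        omega
      · -- I3
        intro T
        have hth : ∀ k : ℕ, ∃ N, ∀ M, N ≤ M → T + 1 ≤ (F (s k)).2 M :=
          fun k => (hIH k).2.2.1 (T + 1)
        choose Nf hNf using hth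
        refine ⟨(Finset.range T).sup Nf + T + 1, fun M hM => ?_⟩
        rw [hrk M, rkx]
        by_cases hne : ((Finset.range (M + 1)).filter fun k => Lx (Fg β) s k ≤ M).Nonempty
        · rw [dif_pos hne]
          have hall : ∀ k ∈ (Finset.range (M + 1)).filter fun k => Lx (Fg β) s k ≤ M,
              T + 1 ≤ (Fg β (s k)).2 M := by
            intro k hk
            rw [Finset.mem_filter] at hk
            rw [hGF k]
            rcases lt_or_ge k T with h | h
            · refine hNf k M ?_
              have := Finset.le_sup (f := Nf) (Finset.mem_range.mpr h)
              omega
            · have := hval M k hk.2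
              omega
          have := Finset.le_inf' hne _ hall
          omega
        · rw [dif_neg hne]; omega
      · -- I4
        intro M
        apply Set.Finite.subset ((Set.finite_Iic M).image s)
        rintro x ⟨hx, hxM⟩
        obtain ⟨a, hsa, hax⟩ := hcol x hx
        rw [hax] at hxM
        have := le_Lx (Fg β) s a
        exact ⟨a, by simp only [Set.mem_Iic]; omega, hsa⟩

/-- THE coloring -/
def c (x y : Ordinal) : ℕ :=
  if x < y then (F y).1 x else if y < x then (F x).1 y else 0

lemma c_symm (x y : Ordinal) : c x y = c y x := by
  unfold c
  rcases lt_trichotomy x y with h | h | h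
  · rw [if_pos h, if_neg (not_lt_of_gt h), if_pos h]
  · rw [h]
  · rw [if_neg (not_lt_of_gt h), if_pos h, if_pos h]

lemma c_lt {x y : Ordinal} (h : x < y) : c x y = (F y).1 x := if_pos h

/-- the `≤ M`-colored predecessors -/
def Pm (M : ℕ) (y : Ordinal) : Set Ordinal := {x | x < y ∧ (F y).1 x ≤ M}

def chain (M : ℕ) : Ordinal → List Ordinal :=
  Ordinal.lt_wf.fix fun y IH =>
    if h : ∃ p, p ∈ Pm M y ∧ ∀ z ∈ Pm M y, z ≤ p then y :: IH h.choose h.choose_spec.1.1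
    else [y]

lemma chain_eq (M : ℕ) (y : Ordinal) :
    chain M y = if h : ∃ p, p ∈ Pm M y ∧ ∀ z ∈ Pm M y, z ≤ p then
      y :: chain M h.choose else [y] := by
  show Ordinal.lt_wf.fix _ y = _
  rw [WellFounded.fix_eq]
  rfl

lemma chain_cons (M : ℕ) (y : Ordinal) : ∃ l, chain M y = y :: l := by
  rw [chain_eq]
  split
  · exact ⟨_, rfl⟩
  · exact ⟨[], rfl⟩

lemma chain_ne_nil (M : ℕ) (y : Ordinal) : chain M y ≠ [] := by
  obtain ⟨l, hl⟩ := chain_cons M y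
  simp [hl]

lemma pm_max {M : ℕ} {y : Ordinal} (hy : y < Omega1) (hne : (Pm M y).Nonempty) :
    ∃ p, p ∈ Pm M y ∧ ∀ z ∈ Pm M y, z ≤ p := by
  have hfin : (Pm M y).Finite := (inv_all y hy).2.2.2 M
  obtain ⟨p, hp, hmax⟩ := Set.Finite.exists_maximalFor id _ hfin hne
  refine ⟨p, hp, fun z hz => ?_⟩
  by_contra hzp
  push_neg at hzp
  exact absurd (hmax hz hzp.le) (not_le.mpr hzp)

lemma chain_suffix {M : ℕ} :
    ∀ y, y < Omega1 → ∀ x ∈ Pm M y, chain M x <:+ chain M y := by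
  intro y
  induction y using Ordinal.induction with
  | h y IH =>
    intro hy x hx
    have hmax := pm_max hy ⟨x, hx⟩
    rw [chain_eq M y, dif_pos hmax]
    have hpspec := hmax.choose_spec
    set p := hmax.choose with hp
    have hsuf : chain M p <:+ y :: chain M p := List.suffix_cons _ _
    rcases eq_or_lt_of_le (hpspec.2 x hx) with he | hlt
    · rw [he]; exact hsuf
    · have hxPm : x ∈ Pm M p := by
        refine ⟨hlt, ?_⟩
        have hI1 := (inv_all y hy).1 x p hlt hpspec.1.1
        exact le_trans hI1 (max_le hx.2 hpspec.1.2)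
      exact (IH p hpspec.1.1 (lt_trans hpspec.1.1 hy) x hxPm).trans hsuf

lemma chain_rank {M : ℕ} :
    ∀ y, y < Omega1 →
      ∃ r, (chain M y).getLast? = some r ∧
        (chain M y).length + (F y).2 M ≤ (F r).2 M + 1 := by
  intro y
  induction y using Ordinal.induction with
  | h y IH =>
    intro hy
    rw [chain_eq M y]
    by_cases h : ∃ p, p ∈ Pm M y ∧ ∀ z ∈ Pm M y, z ≤ p
    · rw [dif_pos h]
      have hpspec := h.choose_spec
      obtain ⟨r, hr1, hr2⟩ :=
        IH h.choose hpspec.1.1 (lt_trans hpspec.1.1 hy)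
      have hrky : (F y).2 M < (F h.choose).2 M :=
        (inv_all y hy).2.1 h.choose hpspec.1.1 M hpspec.1.2
      obtain ⟨l, hl⟩ := chain_cons M h.choose
      refine ⟨r, ?_, ?_⟩
      · rw [hl, List.getLast?_cons_cons, ← hl, hr1]
      · simp only [List.length_cons]
        omega
    · rw [dif_neg h]
      exact ⟨y, rfl, by simp only [List.length_singleton]; omega⟩

end PathNeg

open PathNeg in
/-- `ω₁ ↛_path (ω)²_{ω,<ω}`: there is a coloring `c : [ω₁]² → ω` (a symmetric
function on countable ordinals) such that for every sequence of pairwise distinct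
countable ordinals, the set of colors of consecutive pairs is infinite. -/
theorem omega1_negative_path_relation :
    ∃ c : Ordinal → Ordinal → ℕ, (∀ a b, c a b = c b a) ∧
      ∀ β : ℕ → Ordinal, Function.Injective β →
        (∀ n, β n < (Cardinal.aleph 1).ord) →
        (Set.range fun n : ℕ => c (β n) (β (n + 1))).Infinite := by
  classical
  refine ⟨c, c_symm, ?_⟩
  intro v hv hvΩ
  have hvΩ' : ∀ n, v n < Omega1 := hvΩ
  by_contra hfin
  rw [Set.not_infinite] at hfin
  obtain ⟨M, hM⟩ : ∃ M : ℕ, ∀ n, c (v n) (v (n + 1)) ≤ M := by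
    obtain ⟨M, hM⟩ := hfin.bddAbove
    exact ⟨M, fun n => hM ⟨n, rfl⟩⟩
  set ch := fun n => chain M (v n) with hch
  have hconsec : ∀ n, ch n <:+ ch (n + 1) ∨ ch (n + 1) <:+ ch n := by
    intro n
    have hne : v n ≠ v (n + 1) := fun h => by have := hv h; omega
    rcases lt_or_gt_of_ne hne with h | h
    · left
      exact chain_suffix (v (n + 1)) (hvΩ' _) (v n) ⟨h, by rw [← c_lt h]; exact hM n⟩
    · right
      refine chain_suffix (v n) (hvΩ' _) (v (n + 1)) ⟨h, ?_⟩
      rw [← c_lt h, c_symm]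
      exact hM n
  have suffix_last : ∀ l₁ l₂ : List Ordinal, l₁ <:+ l₂ → l₁ ≠ [] →
      l₁.getLast? = l₂.getLast? := by
    rintro l₁ l₂ ⟨t, ht⟩ h1
    rw [← ht, List.getLast?_append_of_ne_nil _ h1]
  have hlast : ∀ n, (ch n).getLast? = (ch 0).getLast? := by
    intro n
    induction n with
    | zero => rfl
    | succ m ihm =>
      rcases hconsec m with h | h
      · rw [← suffix_last _ _ h (chain_ne_nil M _), ihm]
      · rw [suffix_last _ _ h (chain_ne_nil M _), ihm]
  obtain ⟨r0, hr0, _⟩ := chain_rank (v 0) (hvΩ' 0)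
  set d := fun n => (ch n).length with hd
  have hD : ∀ n, d n ≤ (F r0).2 M + 1 := by
    intro n
    obtain ⟨r, hr, hlen⟩ := chain_rank (v n) (hvΩ' n)
    have : some r = some r0 := by rw [← hr, show (ch n).getLast? = _ from hlast n, hr0]
    have hrr0 : r = r0 := Option.some.inj this
    rw [hrr0] at hlen
    have hdn : d n = (chain M (v n)).length := rfl
    omega
  have hd1 : ∀ n, 1 ≤ d n := by
    intro n
    obtain ⟨l, hl⟩ := chain_cons M (v n)
    simp [hd, hch, hl]
  have hA : ∃ L, {n | d n = L}.Infinite := by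
    by_contra hA
    push_neg at hA
    have hfin' : ∀ L, {n | d n = L}.Finite := fun L => hA L
    have : (Set.univ : Set ℕ).Finite := by
      apply Set.Finite.subset
        (Set.Finite.biUnion (Set.finite_Iic ((F r0).2 M + 1)) fun L _ => hfin' L)
      intro n _
      exact Set.mem_biUnion (hD n) rfl
    exact Set.infinite_univ this
  have hLm := Nat.find_spec hA
  set Lm := Nat.find hA with hLmdef
  have hsmall : {n | d n < Lm}.Finite := by
    apply Set.Finite.subset (Set.Finite.biUnion (Set.finite_Iio Lm)
      fun L (_ : L ∈ Set.Iio Lm) => Set.not_infinite.mp (Nat.find_min hA ‹L ∈ Set.Iio Lm›))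
    intro n hn
    exact Set.mem_biUnion hn rfl
  obtain ⟨K, hK⟩ := hsmall.bddAbove
  have htail : ∀ n, K < n → Lm ≤ d n := by
    intro n hn
    by_contra hcon
    push_neg at hcon
    have := hK (show n ∈ {n | d n < Lm} from hcon)
    omega
  have hLm1 : 1 ≤ Lm := by
    obtain ⟨n₁, hn₁⟩ := hLm.nonempty
    have := hd1 n₁
    have : d n₁ = Lm := hn₁
    omega
  set elt := fun n => (ch n).reverse[Lm - 1]? with helt
  have hagree : ∀ a b : ℕ, ch a <:+ ch b → Lm ≤ d a → elt a = elt b := by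
    rintro a b ⟨t, ht⟩ hda
    have hrev : (ch b).reverse = (ch a).reverse ++ t.reverse := by
      rw [← ht, List.reverse_append]
    rw [helt]
    simp only
    rw [hrev, List.getElem?_append_left]
    rw [List.length_reverse]
    have hda' : d a = (ch a).length := rfl
    have := hd1 a
    omega
  have hconst : ∀ n, K < n → elt n = elt (K + 1) := by
    intro n hn
    induction n with
    | zero => omega
    | succ m ihm =>
      rcases Nat.lt_or_ge K m with hm | hm
      · have h1 := ihm hm
        rcases hconsec m with h | h
        · rw [← hagree m (m + 1) h (htail m hm), h1]
        · rw [hagree (m + 1) m h (htail (m + 1) (by omega)), h1]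
      · have : m = K := by omega
        rw [this]
  have hfib : ∀ n, d n = Lm → elt n = some (v n) := by
    intro n hdn
    obtain ⟨l, hl⟩ := chain_cons M (v n)
    have hlen : l.length = Lm - 1 := by
      have : d n = l.length + 1 := by simp [hd, hch, hl]
      omega
    rw [helt]
    simp only
    rw [hch]
    simp only
    rw [hl, List.reverse_cons, ← hlen]
    have hcc := List.getElem?_concat_length (l := l.reverse) (a := v n)
    rwa [List.length_reverse] at hcc
  obtain ⟨m₁, hm₁mem, hm₁K⟩ : ∃ m₁, m₁ ∈ {n | d n = Lm} ∧ K < m₁ := by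
    obtain ⟨a, ha, hna⟩ := hLm.exists_notMem_finite (Set.finite_Iic K)
    exact ⟨a, ha, by simpa using hna⟩
  obtain ⟨m₂, hm₂mem, hm₂K⟩ : ∃ m₂, m₂ ∈ {n | d n = Lm} ∧ m₁ < m₂ := by
    obtain ⟨a, ha, hna⟩ := hLm.exists_notMem_finite (Set.finite_Iic m₁)
    exact ⟨a, ha, by simpa using hna⟩
  have h1 : elt m₁ = some (v m₁) := hfib m₁ hm₁mem
  have h2 : elt m₂ = some (v m₂) := hfib m₂ hm₂mem
  have h3 : elt m₁ = elt m₂ := by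
    rw [hconst m₁ hm₁K, hconst m₂ (by omega)]
  have : v m₁ = v m₂ := by
    rw [h1, h2] at h3
    exact Option.some.inj h3
  have := hv this
  omega
end
end

section
/- Let μ be a cardinal with μ > cf(μ) = ω and 2^μ = μ⁺, and suppose κ →_ipath (ω)²_{ω,<ω} holds for a cardinal κ ≤ μ⁺. Then there exists a coloring c : μ⁺ × μ⁺ → 2 such that: (1) there are no A ⊆ μ⁺ of size μ⁺ and B ⊆ μ⁺ of size μ with c constantly 0 on A × B; (2) for every α < μ⁺, the set {β < μ⁺ : c(α,β) = 1} has cardinality at most μ; and (3) there are no S ⊆ μ⁺ of size κ and T ⊆ μ⁺ of size μ with c constantly 1 on S × T. -/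
open Cardinal

section Aux

private lemma exists_rec_choice
    (A : Ordinal → Ordinal → (Ordinal → Ordinal → Ordinal) → Set Ordinal)
    (hne : ∀ β i prev, (A β i prev).Nonempty) :
    ∃ b : Ordinal → Ordinal → Ordinal,
      ∀ β i, b β i ∈ A β i (fun α j => if α < β then b α j else 0) := by
  have wf : WellFounded ((· < ·) : Ordinal → Ordinal → Prop) := wellFounded_lt
  classical
  let b : Ordinal → Ordinal → Ordinal :=
    wf.fix (fun β ih => fun i =>
      (hne β i (fun α j => if h : α < β then ih α h j else 0)).some)
  refine ⟨b, fun β i => ?_⟩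
  have hfix : b β = fun i =>
      (hne β i (fun α j => if h : α < β then b α j else 0)).some := by
    exact wf.fix_eq _ β
  have hprev : (fun α j => if h : α < β then b α j else 0)
      = (fun α j => if α < β then b α j else 0) := by
    funext α j
    split <;> simp_all
  rw [hfix, ← hprev]
  exact (hne β i _).some_mem

private lemma mu_limit (μ : Cardinal.{0}) (hcf : μ.ord.cof = ℵ₀) (hμ : ℵ₀ < μ) :
    ∀ θ : Cardinal, ℵ₀ ≤ θ → θ < μ → Order.succ θ < μ := by
  intro θ hθ hθμ
  rcases lt_or_eq_of_le (Order.succ_le_of_lt hθμ) with h | h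
  · exact h
  · exfalso
    have hreg := Cardinal.isRegular_succ hθ
    have : (Order.succ θ).ord.cof = Order.succ θ := hreg.cof_eq
    rw [h, hcf] at this
    exact hμ.ne this

private lemma exists_nu (μ : Cardinal.{0}) (hcf : μ.ord.cof = ℵ₀) (hμ : ℵ₀ < μ) :
    ∃ ν : ℕ → Cardinal, Monotone ν ∧ (∀ n, ℵ₀ ≤ ν n) ∧ (∀ n, ν n < μ) ∧
      (∀ i : Ordinal, i < μ.ord → ∃ n, i < (ν n).ord) := by
  obtain ⟨ι, f, hlsub, hι⟩ := Ordinal.exists_lsub_cof μ.ord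
  rw [hcf] at hι
  have : Nonempty (ι ≃ ℕ) := Cardinal.eq.mp (by rw [hι, mk_nat])
  obtain ⟨eqv⟩ := this
  set f' : ℕ → Ordinal := fun n => f (eqv.symm n) with hf'
  have hf'lt : ∀ n, f' n < μ.ord := by
    intro n; rw [← hlsub]; exact Ordinal.lt_lsub _ _
  refine ⟨fun n => Order.succ (max ℵ₀ ((Finset.range (n+1)).sup fun k => (f' k).card)),
    ?_, ?_, ?_, ?_⟩
  · intro n m hnm
    apply Order.succ_le_succ
    apply max_le_max le_rfl
    exact Finset.sup_mono (Finset.range_subset_range.2 (by omega))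
  · intro n
    exact le_trans (le_max_left _ _) (Order.le_succ _)
  · intro n
    apply mu_limit μ hcf hμ _ (le_max_left _ _)
    apply max_lt hμ
    apply Finset.sup_lt_iff (lt_of_lt_of_le aleph0_pos (le_of_lt hμ)) |>.2
    intro k _
    exact Cardinal.lt_ord.1 (hf'lt k)
  · intro i hi
    rw [← hlsub, Ordinal.lt_lsub_iff] at hi
    obtain ⟨j, hj⟩ := hi
    refine ⟨eqv j, Cardinal.lt_ord.2 ?_⟩
    have h1 : i.card ≤ (f' (eqv j)).card := by
      apply Ordinal.card_le_card
      simpa [hf'] using hj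
    calc i.card ≤ (Finset.range (eqv j + 1)).sup (fun k => (f' k).card) :=
          le_trans h1 (Finset.le_sup (f := fun k => (f' k).card) (Finset.self_mem_range_succ _))
      _ ≤ max ℵ₀ _ := le_max_right _ _
      _ < Order.succ _ := Order.lt_succ _

private lemma exists_H (μ : Cardinal.{0}) :
    ∃ H : Ordinal → Ordinal → Ordinal, ∀ β, μ.ord ≤ β → β < (Order.succ μ).ord →
      ∀ ξ, ξ < β → ∃ i, i < μ.ord ∧ H β i = ξ := by
  classical
  have key : ∀ β : Ordinal, ∃ Hb : Ordinal → Ordinal, μ.ord ≤ β → β < (Order.succ μ).ord →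
      ∀ ξ, ξ < β → ∃ i, i < μ.ord ∧ Hb i = ξ := by
    intro β
    by_cases hβ : μ.ord ≤ β ∧ β < (Order.succ μ).ord
    · have hcard : β.card = μ := by
        apply le_antisymm
        · exact Order.lt_succ_iff.1 (Cardinal.lt_ord.1 hβ.2)
        · have := Ordinal.card_le_card hβ.1
          rwa [Cardinal.card_ord] at this
      have hmk : #(Set.Iio μ.ord) = #(Set.Iio β) := by
        rw [Ordinal.mk_Iio_ordinal, Ordinal.mk_Iio_ordinal, Cardinal.card_ord, hcard]
      obtain ⟨eqv⟩ := Cardinal.eq.mp hmk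
      refine ⟨fun i => if h : i < μ.ord then (eqv ⟨i, h⟩ : Ordinal) else 0, fun _ _ ξ hξ => ?_⟩
      obtain ⟨i, hi⟩ : ∃ i : Set.Iio μ.ord, eqv i = ⟨ξ, hξ⟩ :=
        ⟨eqv.symm ⟨ξ, hξ⟩, eqv.apply_symm_apply _⟩
      refine ⟨i.val, i.2, ?_⟩
      have h2 : (i : Ordinal) < μ.ord := i.2
      simp only [dif_pos h2]
      rw [show (⟨(i : Ordinal), h2⟩ : Set.Iio μ.ord) = i from rfl, hi]
    · exact ⟨fun _ => 0, fun h1 h2 => absurd ⟨h1, h2⟩ hβ⟩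
  choose H hH using key
  exact ⟨H, hH⟩

private lemma succ_power_eq (μ : Cardinal) (hμ : ℵ₀ ≤ μ) (h2 : 2 ^ μ = Order.succ μ) :
    (Order.succ μ) ^ μ = Order.succ μ := by
  apply le_antisymm
  · calc (Order.succ μ) ^ μ ≤ (2 ^ μ) ^ μ := power_le_power_right (h2 ▸ le_rfl)
      _ = 2 ^ (μ * μ) := by rw [← power_mul]
      _ = 2 ^ μ := by rw [mul_eq_self hμ]
      _ = Order.succ μ := h2
  · exact self_le_power _ (le_trans (by norm_num) hμ)

private lemma exists_Bfam (μ : Cardinal.{0}) (hμ : ℵ₀ < μ) (h2 : 2 ^ μ = Order.succ μ) :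
    ∃ Bfam : Ordinal → Set Ordinal,
      (∀ ξ, Bfam ξ ⊆ Set.Iio (Order.succ μ).ord ∧ #(Bfam ξ) = lift.{1,0} μ) ∧
      (∀ B : Set Ordinal, B ⊆ Set.Iio (Order.succ μ).ord → #B = lift.{1,0} μ →
        ∃ ξ, ξ < (Order.succ μ).ord ∧ Bfam ξ = B) := by
  classical
  set Λ := (Order.succ μ).ord with hΛ
  set 𝒮 : Set (Set Ordinal) := {B | B ⊆ Set.Iio Λ ∧ #B = lift.{1,0} μ} with h𝒮
  have hB₀ : (Set.Iio μ.ord : Set Ordinal) ∈ 𝒮 := by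
    constructor
    · exact Set.Iio_subset_Iio (Cardinal.ord_le_ord.2 (Order.le_succ μ))
    · rw [Ordinal.mk_Iio_ordinal, Cardinal.card_ord]
  have hne : Nonempty ↥𝒮 := ⟨⟨_, hB₀⟩⟩
  have hIioΛ : #(Set.Iio Λ) = lift.{1,0} (Order.succ μ) := by
    rw [Ordinal.mk_Iio_ordinal, Cardinal.card_ord]
  have hIioμ : #(Set.Iio μ.ord : Set Ordinal) = lift.{1,0} μ := by
    rw [Ordinal.mk_Iio_ordinal, Cardinal.card_ord]
  have hSle : #↥𝒮 ≤ #(Set.Iio Λ) := by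
    have hes : ∀ s : ↥𝒮, Nonempty (↥(Set.Iio μ.ord) ≃ ↥(s.val)) := by
      intro s
      exact Cardinal.eq.mp (by rw [hIioμ, s.2.2])
    have es : ∀ s : ↥𝒮, ↥(Set.Iio μ.ord) ≃ ↥(s.val) := fun s => (hes s).some
    set G : ↥𝒮 → (↥(Set.Iio μ.ord) → ↥(Set.Iio Λ)) :=
      fun s x => ⟨(es s x).val, s.2.1 (es s x).2⟩ with hG
    have hGrange : ∀ s : ↥𝒮, s.val = Set.range (fun x => (G s x).val) := by
      intro s
      ext y
      constructor
      · intro hy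
        exact ⟨(es s).symm ⟨y, hy⟩, by simp [hG]⟩
      · rintro ⟨x, rfl⟩
        exact (es s x).2
    have hGinj : Function.Injective G := by
      intro s t hst
      apply Subtype.ext
      rw [hGrange s, hGrange t, hst]
    calc #↥𝒮 ≤ #(↥(Set.Iio μ.ord) → ↥(Set.Iio Λ)) := Cardinal.mk_le_of_injective hGinj
      _ = #(Set.Iio Λ) ^ #(Set.Iio μ.ord) := (Cardinal.power_def _ _).symm
      _ = lift.{1,0} (Order.succ μ) ^ lift.{1,0} μ := by rw [hIioΛ, hIioμ]
      _ = lift.{1,0} ((Order.succ μ) ^ μ) := by rw [Cardinal.lift_power]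
      _ = lift.{1,0} (Order.succ μ) := by rw [succ_power_eq μ (le_of_lt hμ) h2]
      _ = #(Set.Iio Λ) := hIioΛ.symm
  obtain ⟨f⟩ := (Cardinal.le_def _ _).mp hSle
  set F : ↥(Set.Iio Λ) → ↥𝒮 := Function.invFun f with hF
  have hFsurj : Function.Surjective F := Function.invFun_surjective f.injective
  refine ⟨fun ξ => if h : ξ < Λ then (F ⟨ξ, h⟩).val else Set.Iio μ.ord, ?_, ?_⟩
  · intro ξ
    by_cases h : ξ < Λ
    · simp only [dif_pos h]; exact (F ⟨ξ, h⟩).2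
    · simp only [dif_neg h]; exact hB₀
  · intro B hB1 hB2
    obtain ⟨x, hx⟩ := hFsurj ⟨B, hB1, hB2⟩
    refine ⟨x.val, x.2, ?_⟩
    have hx2 : (x : Ordinal) < Λ := x.2
    simp only [dif_pos hx2]
    rw [show (⟨(x : Ordinal), hx2⟩ : ↥(Set.Iio Λ)) = x from rfl, hx]

private lemma exists_enum (κ : Cardinal.{0}) (S : Set Ordinal.{0}) (hS : #S = lift.{1,0} κ) :
    ∃ e : Ordinal → Ordinal, (∀ x y, x < y → y < κ.ord → e x < e y) ∧
      (∀ x, x < κ.ord → e x ∈ S) := by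
  classical
  have hle : (lift.{1,0} κ).ord ≤ Ordinal.type ((· < ·) : ↥S → ↥S → Prop) := by
    apply Cardinal.ord_le.2
    rw [Ordinal.card_type, hS]
  have hlt : ∀ x : Ordinal, x < κ.ord →
      Ordinal.lift.{1,0} x < Ordinal.type ((· < ·) : ↥S → ↥S → Prop) := by
    intro x hx
    apply lt_of_lt_of_le _ hle
    rw [← Cardinal.lift_ord]
    exact Ordinal.lift_lt.2 hx
  set e : Ordinal → Ordinal := fun x =>
    if h : x < κ.ord then
      ((Ordinal.enum _ ⟨Ordinal.lift.{1,0} x, hlt x h⟩ : ↥S) : Ordinal) else 0 with he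
  refine ⟨e, ?_, ?_⟩
  · intro x y hxy hy
    have hx := lt_trans hxy hy
    simp only [he, dif_pos hx, dif_pos hy]
    have := (Ordinal.enum_lt_enum (r := ((· < ·) : ↥S → ↥S → Prop))
      (o₁ := ⟨Ordinal.lift.{1,0} x, hlt x hx⟩) (o₂ := ⟨Ordinal.lift.{1,0} y, hlt y hy⟩)).2
    exact this (Subtype.mk_lt_mk.2 (Ordinal.lift_lt.2 hxy))
  · intro x hx
    simp only [he, dif_pos hx]
    exact (Ordinal.enum ((· < ·) : ↥S → ↥S → Prop) ⟨Ordinal.lift.{1,0} x, hlt x hx⟩).2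

end Aux

/-- Main theorem: let `μ` be a singular cardinal of countable cofinality with
`2^μ = μ⁺`, and let `κ ≤ μ⁺` satisfy the increasing path relation
`κ →_ipath (ω)²_{ω,<ω}`.  Then there is a coloring `c : μ⁺ × μ⁺ → 2` witnessing
the negative polarized relation with alternatives
`(μ⁺ over μ⁺) ↛ ((μ⁺ over μ) (κ over μ) ∨ (1 over μ⁺))`:
(1) no `0`-monochromatic product `A × B` with `|A| = μ⁺`, `|B| = μ`;
(2) every vertical section `{β : c α β = 1}` has size at most `μ`
    (so there is no `1`-monochromatic product of size `1 × μ⁺`);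
(3) no `1`-monochromatic product `S × T` with `|S| = κ`, `|T| = μ`. -/
theorem main_polarized_with_alternatives (μ κ : Cardinal)
    (hcf : μ.ord.cof = Cardinal.aleph0) (hμ : Cardinal.aleph0 < μ)
    (h2 : 2 ^ μ = Order.succ μ) (hκ : κ ≤ Order.succ μ)
    (hpath : ∀ d : Ordinal → Ordinal → ℕ, (∀ a b, d a b = d b a) →
      ∃ γ : ℕ → Ordinal, StrictMono γ ∧ (∀ n, γ n < κ.ord) ∧
        (Set.range fun n : ℕ => d (γ n) (γ (n + 1))).Finite) :
    ∃ c : Ordinal → Ordinal → Fin 2,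
      (¬∃ A B : Set Ordinal, A ⊆ Set.Iio (Order.succ μ).ord ∧
        B ⊆ Set.Iio (Order.succ μ).ord ∧
        Cardinal.mk A = Cardinal.lift.{1,0} (Order.succ μ) ∧
        Cardinal.mk B = Cardinal.lift.{1,0} μ ∧
        ∀ a ∈ A, ∀ b ∈ B, c a b = 0) ∧
      (∀ α : Ordinal, α < (Order.succ μ).ord →
        Cardinal.mk {β : Ordinal | β < (Order.succ μ).ord ∧ c α β = 1} ≤
          Cardinal.lift.{1,0} μ) ∧
      (¬∃ S T : Set Ordinal, S ⊆ Set.Iio (Order.succ μ).ord ∧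
        T ⊆ Set.Iio (Order.succ μ).ord ∧
        Cardinal.mk S = Cardinal.lift.{1,0} κ ∧
        Cardinal.mk T = Cardinal.lift.{1,0} μ ∧
        ∀ a ∈ S, ∀ b ∈ T, c a b = 1) := by
  classical
  have hℵμ : ℵ₀ ≤ μ := le_of_lt hμ
  obtain ⟨ν, hνmono, hνℵ, hνμ, hνcof⟩ := exists_nu μ hcf hμ
  obtain ⟨H, hH⟩ := exists_H μ
  obtain ⟨Bfam, hBfam1, hBfam2⟩ := exists_Bfam μ hμ h2
  -- the level function
  obtain ⟨lvl, hlvl_le, hlvl_spec⟩ :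
      ∃ lvl : Ordinal → ℕ, (∀ i n, i < (ν n).ord → lvl i ≤ n) ∧
        (∀ i, i < μ.ord → i < (ν (lvl i)).ord) := by
    refine ⟨fun i => if h : ∃ n, i < (ν n).ord then Nat.find h else 0, ?_, ?_⟩
    · intro i n hin
      have hex : ∃ n', i < (ν n').ord := ⟨n, hin⟩
      simp only [dif_pos hex]
      exact Nat.find_min' hex hin
    · intro i hi
      have h := hνcof i hi
      simp only [dif_pos h]
      exact Nat.find_spec h
  -- the recursive choice of elements
  set ACh : Ordinal → Ordinal → (Ordinal → Ordinal → Ordinal) → Set Ordinal :=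
    fun β i prev => Bfam (H β i) \
      ⋃ α ∈ (H β '' Set.Iio ((ν (lvl i)).ord)) ∩ Set.Iio β,
        prev α '' Set.Iio ((ν (lvl i)).ord) with hACh
  have hAne : ∀ β i prev, (ACh β i prev).Nonempty := by
    intro β i prev
    rw [Set.nonempty_iff_ne_empty]
    intro hemp
    have hsub : Bfam (H β i) ⊆
        ⋃ α ∈ (H β '' Set.Iio ((ν (lvl i)).ord)) ∩ Set.Iio β,
          prev α '' Set.Iio ((ν (lvl i)).ord) := by
      rw [← Set.diff_eq_empty]
      exact hemp
    set l := lvl i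
    have hU : #(⋃ α ∈ (H β '' Set.Iio ((ν l).ord)) ∩ Set.Iio β,
        prev α '' Set.Iio ((ν l).ord)) < lift.{1,0} μ := by
      have hIio : #(Set.Iio ((ν l).ord) : Set Ordinal) = lift.{1,0} (ν l) := by
        rw [Ordinal.mk_Iio_ordinal, Cardinal.card_ord]
      have hs : #((H β '' Set.Iio ((ν l).ord)) ∩ Set.Iio β : Set Ordinal) ≤ lift.{1,0} (ν l) := by
        calc #((H β '' Set.Iio ((ν l).ord)) ∩ Set.Iio β : Set Ordinal)
            ≤ #(H β '' Set.Iio ((ν l).ord)) := mk_le_mk_of_subset Set.inter_subset_left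
          _ ≤ #(Set.Iio ((ν l).ord) : Set Ordinal) := mk_image_le
          _ = lift.{1,0} (ν l) := hIio
      have himg : ∀ α, #(prev α '' Set.Iio ((ν l).ord)) ≤ lift.{1,0} (ν l) :=
        fun α => le_trans mk_image_le hIio.le
      calc #(⋃ α ∈ (H β '' Set.Iio ((ν l).ord)) ∩ Set.Iio β,
              prev α '' Set.Iio ((ν l).ord))
          ≤ #((H β '' Set.Iio ((ν l).ord)) ∩ Set.Iio β : Set Ordinal) *
              ⨆ α : ((H β '' Set.Iio ((ν l).ord)) ∩ Set.Iio β : Set Ordinal),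
                #(prev α.1 '' Set.Iio ((ν l).ord)) := mk_biUnion_le _ _
        _ ≤ lift.{1,0} (ν l) * lift.{1,0} (ν l) := by
            apply mul_le_mul' hs
            rcases isEmpty_or_nonempty
                ↥((H β '' Set.Iio ((ν l).ord)) ∩ Set.Iio β : Set Ordinal) with hc | hc
            · rw [ciSup_of_empty]
              exact zero_le
            · exact ciSup_le' fun α => himg α.1
        _ = lift.{1,0} (ν l * ν l) := by rw [Cardinal.lift_mul]
        _ = lift.{1,0} (ν l) := by rw [mul_eq_self (hνℵ l)]
        _ < lift.{1,0} μ := lift_lt.2 (hνμ l)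
    have hle : lift.{1,0} μ ≤ #(⋃ α ∈ (H β '' Set.Iio ((ν l).ord)) ∩ Set.Iio β,
        prev α '' Set.Iio ((ν l).ord)) := by
      rw [← (hBfam1 (H β i)).2]
      exact mk_le_mk_of_subset hsub
    exact absurd hle (not_le.2 hU)
  obtain ⟨b, hb⟩ := exists_rec_choice ACh hAne
  set Lev : Ordinal → ℕ → Set Ordinal := fun α n => b α '' Set.Iio ((ν n).ord) with hLev
  set R : Ordinal → Set Ordinal := fun α => ⋃ n, Lev α n with hR
  have hLevmono : ∀ α {n m : ℕ}, n ≤ m → Lev α n ⊆ Lev α m := by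
    intro α n m hnm
    exact Set.image_mono (Set.Iio_subset_Iio (Cardinal.ord_le_ord.2 (hνmono hnm)))
  have hLevcard : ∀ α n, #(Lev α n) ≤ lift.{1,0} (ν n) := by
    intro α n
    calc #(Lev α n) ≤ #(Set.Iio ((ν n).ord) : Set Ordinal) := mk_image_le
      _ = lift.{1,0} (ν n) := by rw [Ordinal.mk_Iio_ordinal, Cardinal.card_ord]
  have hmemB : ∀ β i, b β i ∈ Bfam (H β i) := fun β i => (hb β i).1
  have havoid : ∀ β i α, α < β → α ∈ H β '' Set.Iio ((ν (lvl i)).ord) →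
      b β i ∉ Lev α (lvl i) := by
    intro β i α hαβ hαmem hmem
    apply (hb β i).2
    have hprev : (fun j => if α < β then b α j else 0) = b α := by
      funext j; rw [if_pos hαβ]
    refine Set.mem_biUnion ⟨hαmem, hαβ⟩ ?_
    show b β i ∈ (fun j => if α < β then b α j else 0) '' Set.Iio ((ν (lvl i)).ord)
    rw [hprev]
    exact hmem
  have hRcard : ∀ α, #(R α) ≤ lift.{1,0} μ := by
    intro α
    have h1 : lift.{0,1} #(R α) ≤ lift.{1,0} #(ℕ) * ⨆ n : ℕ, lift.{0,1} #(Lev α n) :=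
      mk_iUnion_le_lift _
    rw [Cardinal.lift_uzero] at h1
    have h2' : (⨆ n : ℕ, lift.{0,1} #(Lev α n)) ≤ lift.{1,0} μ := by
      apply ciSup_le'
      intro n
      rw [Cardinal.lift_uzero]
      exact le_trans (hLevcard α n) (lift_le.2 (le_of_lt (hνμ n)))
    calc #(R α) ≤ lift.{1,0} #(ℕ) * ⨆ n : ℕ, lift.{0,1} #(Lev α n) := h1
      _ ≤ ℵ₀ * lift.{1,0} μ := by
          apply mul_le_mul' _ h2'
          rw [mk_nat, lift_aleph0]
      _ = lift.{1,0} μ := by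
          rw [mul_eq_max (le_refl ℵ₀) (aleph0_le_lift.2 hℵμ), max_eq_right (aleph0_le_lift.2 hℵμ)]
  -- the coloring
  set c : Ordinal → Ordinal → Fin 2 :=
    fun α t => if μ.ord ≤ α ∧ t ∈ R α then 1 else 0 with hc
  have hc1 : ∀ α t, c α t = 1 ↔ (μ.ord ≤ α ∧ t ∈ R α) := by
    intro α t
    constructor
    · intro h
      by_contra hcon
      rw [hc] at h
      simp only [if_neg hcon] at h
      exact absurd h (by decide)
    · intro h
      rw [hc]; simp only [if_pos h]
  refine ⟨c, ?_, ?_, ?_⟩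
  · -- part (1)
    rintro ⟨As, B, hAs1, hB1, hAs2, hB2, hAB⟩
    obtain ⟨ξ, hξΛ, hξB⟩ := hBfam2 B hB1 hB2
    set δ := max (Order.succ ξ) μ.ord with hδ
    have hδΛ : δ < (Order.succ μ).ord := by
      apply max_lt
      · exact (Cardinal.isSuccLimit_ord (le_trans hℵμ (Order.le_succ μ))).succ_lt hξΛ
      · exact Cardinal.ord_lt_ord.2 (Order.lt_succ μ)
    obtain ⟨α, hαAs, hδα⟩ : ∃ α ∈ As, δ ≤ α := by
      by_contra hcon
      push_neg at hcon
      have hsub : As ⊆ Set.Iio δ := fun a ha => hcon a ha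
      have h1 : #As ≤ lift.{1,0} μ := by
        calc #As ≤ #(Set.Iio δ : Set Ordinal) := mk_le_mk_of_subset hsub
          _ = lift.{1,0} δ.card := Ordinal.mk_Iio_ordinal δ
          _ ≤ lift.{1,0} μ := lift_le.2 (Order.lt_succ_iff.1 (Cardinal.lt_ord.1 hδΛ))
      rw [hAs2] at h1
      exact absurd (lift_le.1 h1) (not_le.2 (Order.lt_succ μ))
    have hαμ : μ.ord ≤ α := le_trans (le_max_right _ _) hδα
    have hαΛ : α < (Order.succ μ).ord := hAs1 hαAs
    have hξα : ξ < α := lt_of_lt_of_le (Order.lt_succ ξ) (le_trans (le_max_left _ _) hδα)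
    obtain ⟨i, hiμ, hHi⟩ := hH α hαμ hαΛ ξ hξα
    set pt := b α i with hpt
    have hptB : pt ∈ B := by
      have := hmemB α i
      rw [hHi, hξB] at this
      exact this
    have hptR : pt ∈ R α := by
      obtain ⟨n, hn⟩ := hνcof i hiμ
      exact Set.mem_iUnion.2 ⟨n, ⟨i, hn, rfl⟩⟩
    have := hAB α hαAs pt hptB
    rw [(hc1 α pt).2 ⟨hαμ, hptR⟩] at this
    exact absurd this (by decide)
  · -- part (2)
    intro α _
    have hsub : {t : Ordinal | t < (Order.succ μ).ord ∧ c α t = 1} ⊆ R α := by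
      intro t ht
      exact ((hc1 α t).1 ht.2).2
    exact le_trans (mk_le_mk_of_subset hsub) (hRcard α)
  · -- part (3)
    rintro ⟨S, T, hSsub, hTsub, hSmk, hTmk, hST⟩
    have hTne : T.Nonempty := by
      rw [Set.nonempty_iff_ne_empty]
      intro hemp
      rw [hemp, mk_emptyCollection] at hTmk
      have : lift.{1,0} μ ≠ 0 := by
        simp only [ne_eq, lift_eq_zero]
        exact ne_of_gt (lt_of_lt_of_le aleph0_pos hℵμ)
      exact this hTmk.symm
    obtain ⟨t₀, ht₀⟩ := hTne
    have hSprop : ∀ a ∈ S, μ.ord ≤ a ∧ T ⊆ R a := by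
      intro a ha
      constructor
      · exact ((hc1 a t₀).1 (hST a ha t₀ ht₀)).1
      · intro t ht
        exact ((hc1 a t).1 (hST a ha t ht)).2
    obtain ⟨e, hemono, hemem⟩ := exists_enum κ S hSmk
    -- the pair coloring
    set D : Ordinal → Ordinal → ℕ := fun α β =>
      if h : ∃ m, α ∈ H β '' Set.Iio ((ν m).ord) then Nat.find h else 0 with hD
    have hDspec : ∀ α β (h : ∃ m, α ∈ H β '' Set.Iio ((ν m).ord)),
        α ∈ H β '' Set.Iio ((ν (D α β)).ord) := by
      intro α β h
      rw [hD]
      simp only [dif_pos h]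
      exact Nat.find_spec h
    set d : Ordinal → Ordinal → ℕ := fun x y =>
      if h : x ≠ y ∧ max x y < κ.ord then D (e (min x y)) (e (max x y)) else 0 with hd
    have hdsymm : ∀ x y, d x y = d y x := by
      intro x y
      rw [hd]
      by_cases h : x ≠ y ∧ max x y < κ.ord
      · have h' : y ≠ x ∧ max y x < κ.ord := ⟨h.1.symm, by rw [max_comm]; exact h.2⟩
        simp only [dif_pos h, dif_pos h']
        rw [min_comm, max_comm]
      · have h' : ¬(y ≠ x ∧ max y x < κ.ord) := by
          intro hcon
          exact h ⟨hcon.1.symm, by rw [max_comm]; exact hcon.2⟩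
        simp only [dif_neg h, dif_neg h']
    obtain ⟨γ, hγmono, hγlt, hγfin⟩ := hpath d hdsymm
    -- the increasing sequence in S
    set α' : ℕ → Ordinal := fun k => e (γ k) with hα'
    have hα'mono : ∀ k, α' k < α' (k+1) := by
      intro k
      exact hemono _ _ (hγmono (Nat.lt_succ_self k)) (hγlt (k+1))
    have hα'S : ∀ k, α' k ∈ S := fun k => hemem _ (hγlt k)
    have hα'μ : ∀ k, μ.ord ≤ α' k := fun k => (hSprop _ (hα'S k)).1
    have hα'Λ : ∀ k, α' k < (Order.succ μ).ord := fun k => hSsub (hα'S k)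
    have hα'T : ∀ k, T ⊆ R (α' k) := fun k => (hSprop _ (hα'S k)).2
    -- the D values along the path exist
    have hDex : ∀ k, ∃ m, α' k ∈ H (α' (k+1)) '' Set.Iio ((ν m).ord) := by
      intro k
      obtain ⟨i, hiμ, hHi⟩ := hH (α' (k+1)) (hα'μ (k+1)) (hα'Λ (k+1)) (α' k) (hα'mono k)
      obtain ⟨m, hm⟩ := hνcof i hiμ
      exact ⟨m, ⟨i, hm, hHi⟩⟩
    -- bound the colors
    obtain ⟨mb, hmb⟩ : ∃ mb : ℕ, ∀ k, d (γ k) (γ (k+1)) ≤ mb := by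
      obtain ⟨mb, hmb⟩ := hγfin.bddAbove
      exact ⟨mb, fun k => hmb ⟨k, rfl⟩⟩
    have hdval : ∀ k, d (γ k) (γ (k+1)) = D (α' k) (α' (k+1)) := by
      intro k
      have hne : γ k ≠ γ (k+1) := ne_of_lt (hγmono (Nat.lt_succ_self k))
      have hmax : max (γ k) (γ (k+1)) = γ (k+1) :=
        max_eq_right (le_of_lt (hγmono (Nat.lt_succ_self k)))
      have hmin : min (γ k) (γ (k+1)) = γ k :=
        min_eq_left (le_of_lt (hγmono (Nat.lt_succ_self k)))
      rw [hd]
      have hcond : γ k ≠ γ (k+1) ∧ max (γ k) (γ (k+1)) < κ.ord := by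
        refine ⟨hne, ?_⟩
        rw [hmax]; exact hγlt (k+1)
      simp only [dif_pos hcond]
      rw [hmin, hmax]
    have hDle : ∀ k, D (α' k) (α' (k+1)) ≤ mb := by
      intro k
      rw [← hdval k]
      exact hmb k
    -- the rank function g
    obtain ⟨g, hg_mem, hg_min⟩ :
        ∃ g : Ordinal → Ordinal → ℕ, (∀ α t, t ∈ R α → t ∈ Lev α (g α t)) ∧
          (∀ α t n, t ∈ Lev α n → g α t ≤ n) := by
      refine ⟨fun α t => if h : ∃ n, t ∈ Lev α n then Nat.find h else 0, ?_, ?_⟩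
      · intro α t ht
        obtain ⟨n, hn⟩ := Set.mem_iUnion.1 ht
        have hex : ∃ n', t ∈ Lev α n' := ⟨n, hn⟩
        simp only [dif_pos hex]
        exact Nat.find_spec hex
      · intro α t n hn
        have hex : ∃ n', t ∈ Lev α n' := ⟨n, hn⟩
        simp only [dif_pos hex]
        exact Nat.find_min' hex hn
    -- the key stepping-down lemma
    have key : ∀ α β t, α < β → t ∈ R β → t ∈ R α →
        α ∈ H β '' Set.Iio ((ν (g β t)).ord) → g β t < g α t := by
      intro α β t hαβ htβ htα hmem
      obtain ⟨i, hi, hbi⟩ := hg_mem β t htβ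
      have hiμ : i < μ.ord := by
        apply lt_of_lt_of_le hi
        exact Cardinal.ord_le_ord.2 (le_of_lt (hνμ _))
      have hl1 : lvl i ≤ g β t := hlvl_le i _ hi
      have hl2 : g β t ≤ lvl i := by
        apply hg_min β t
        exact ⟨i, hlvl_spec i hiμ, hbi⟩
      have hleq : lvl i = g β t := le_antisymm hl1 hl2
      have hnot : t ∉ Lev α (g β t) := by
        rw [← hleq]
        rw [← hbi]
        apply havoid β i α hαβ
        rw [hleq]
        exact hmem
      by_contra hcon
      push_neg at hcon
      exact hnot (hLevmono α hcon (hg_mem α t htα))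
    -- every t ∈ T has small rank at some stage
    have hsmall : ∀ t ∈ T, ∃ k, g (α' k) t ≤ mb := by
      intro t ht
      by_contra hcon
      push_neg at hcon
      have hdec : ∀ k, g (α' (k+1)) t < g (α' k) t := by
        intro k
        apply key _ _ _ (hα'mono k) (hα'T (k+1) ht) (hα'T k ht)
        have h1 := hDspec (α' k) (α' (k+1)) (hDex k)
        apply Set.image_mono (Set.Iio_subset_Iio _) h1
        apply Cardinal.ord_le_ord.2
        apply hνmono
        exact le_of_lt (lt_of_le_of_lt (hDle k) (hcon (k+1)))
      have haux : ∀ k, g (α' k) t + k ≤ g (α' 0) t := by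
        intro k
        induction k with
        | zero => omega
        | succ n ih =>
          have := hdec n
          omega
      have := haux (g (α' 0) t + 1)
      omega
    -- T is covered by countably many small sets
    have hTcov : T ⊆ ⋃ k : ℕ, Lev (α' k) mb := by
      intro t ht
      obtain ⟨k, hk⟩ := hsmall t ht
      exact Set.mem_iUnion.2 ⟨k, hLevmono _ hk (hg_mem _ t (hα'T k ht))⟩
    have hTle : lift.{1,0} μ ≤ lift.{1,0} (ν mb) := by
      rw [← hTmk]
      calc #T ≤ #(⋃ k : ℕ, Lev (α' k) mb) := mk_le_mk_of_subset hTcov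
        _ ≤ ℵ₀ * lift.{1,0} (ν mb) := by
            have h1 : lift.{0,1} #(⋃ k : ℕ, Lev (α' k) mb) ≤
                lift.{1,0} #(ℕ) * ⨆ k : ℕ, lift.{0,1} #(Lev (α' k) mb) :=
              mk_iUnion_le_lift _
            rw [Cardinal.lift_uzero] at h1
            apply le_trans h1
            apply mul_le_mul'
            · rw [mk_nat, lift_aleph0]
            · apply ciSup_le'
              intro k
              rw [Cardinal.lift_uzero]
              exact hLevcard _ mb
        _ = lift.{1,0} (ν mb) := by
            rw [mul_eq_max (le_refl ℵ₀) (aleph0_le_lift.2 (hνℵ mb)),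
              max_eq_right (aleph0_le_lift.2 (hνℵ mb))]
    exact absurd (lift_le.1 hTle) (not_le.2 (hνμ mb))
end

section
/- Let μ⁺ be the successor of an infinite cardinal μ and let (B_β : β < μ⁺) enumerate all subsets of μ⁺ of cardinality μ (assuming 2^μ = μ⁺). Then there exists a family of ordinals γ(α,ε) < μ⁺ for α < μ⁺ and ε < μ, together with for each α < μ⁺ a surjective enumeration (α_η : η < μ) of the ordinals below α and a surjective enumeration (B_{αε} : ε < μ) of {B_β : β < α}, such that for all α, ε: γ(α,ε) ∈ B_{αε}, and γ(α,ε) ∉ {γ(α_η, ζ) : η < ε, ζ ≤ ε}. -/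
/-!
Choose `γ(α, ε)` by well-founded recursion on `α`. Since `α_η < α`, the values `γ(α_η, ζ)` with
`η < ε` and `ζ ≤ ε` are already defined when `γ(α, ε)` is chosen, and there are at most
`|ε + 1|² < μ` of them, so they cannot exhaust `B_{αε}`, which has cardinality `μ`.
Taking `B_{αε} := B_{α_ε}` makes `(B_{αε} : ε < μ)` enumerate `{B_β : β < α}`.
-/

open Cardinal Set

universe u

section AvoidingChoice

variable {ι J X : Type*} [Preorder ι] [WellFoundedLT ι] [Preorder J] [Nonempty X]

/-- Arbitrary when every point of `S i j` is among the values to be avoided. -/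
noncomputable def avoidingChoice (e : ι → J → ι) (S : ι → J → Set X) : ι → J → X :=
  WellFoundedLT.fix fun i IH j => Classical.epsilon fun x =>
    x ∈ S i j ∧ ∀ k < j, ∀ h : e i k < i, ∀ l ≤ j, IH (e i k) h l ≠ x

theorem avoidingChoice_eq (e : ι → J → ι) (S : ι → J → Set X) (i : ι) (j : J) :
    avoidingChoice e S i j = Classical.epsilon fun x =>
      x ∈ S i j ∧ ∀ k < j, e i k < i → ∀ l ≤ j, avoidingChoice e S (e i k) l ≠ x := by
  rw [avoidingChoice, WellFoundedLT.fix_eq]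

theorem avoidingChoice_spec {e : ι → J → ι} {S : ι → J → Set X} {i : ι} {j : J}
    (h : (S i j \ (fun p => avoidingChoice e S (e i p.1) p.2) '' Iio j ×ˢ Iic j).Nonempty) :
    avoidingChoice e S i j ∈ S i j ∧
      ∀ k < j, e i k < i → ∀ l ≤ j, avoidingChoice e S (e i k) l ≠ avoidingChoice e S i j := by
  obtain ⟨x, hxS, hx⟩ := h
  rw [avoidingChoice_eq]
  exact Classical.epsilon_spec (p := fun y => y ∈ S i j ∧
      ∀ k < j, e i k < i → ∀ l ≤ j, avoidingChoice e S (e i k) l ≠ y)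
    ⟨x, hxS, fun k hk _ l hl hkl => hx ⟨(k, l), ⟨hk, hl⟩, hkl⟩⟩

end AvoidingChoice

theorem mk_Iio_prod_Iic_lt {μ : Cardinal.{u}} (hμ : ℵ₀ ≤ μ) {ε : Ordinal.{u}} (hε : ε < μ.ord) :
    #(Iio ε ×ˢ Iic ε) < lift.{u + 1} μ := by
  have hsucc : Order.succ ε < μ.ord := (isSuccLimit_ord hμ).succ_lt hε
  rw [mk_setProd, ← Order.Iio_succ, mk_Iio_ordinal, mk_Iio_ordinal, ← lift_mul, lift_lt]
  exact mul_lt_of_lt hμ (lt_ord.mp hε) (lt_ord.mp hsucc)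

theorem exists_enum_Iio_of_card_le {μ : Cardinal.{u}} {α : Ordinal.{u}} (hα : 0 < α) (hμ : α.card ≤ μ) :
    ∃ f : Ordinal → Ordinal, (∀ η < μ.ord, f η < α) ∧ ∀ x < α, ∃ η < μ.ord, f η = x := by
  have hle : #(Iio α) ≤ #(Iio μ.ord) := by
    rwa [mk_Iio_ordinal, mk_Iio_ordinal, card_ord, lift_le]
  obtain ⟨g⟩ := hle
  have : Nonempty (Iio α) := ⟨⟨0, hα⟩⟩
  let f : Iio μ.ord → Iio α := Function.invFun g
  refine ⟨fun η => if h : η < μ.ord then f ⟨η, h⟩ else 0,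
    fun η hη => by simp only [dif_pos hη]; exact (f _).2, fun x hx => ?_⟩
  obtain ⟨⟨η, hη : η < μ.ord⟩, hηx⟩ := Function.invFun_surjective g.injective ⟨x, hx⟩
  exact ⟨η, hη, (dif_pos hη).trans (congrArg Subtype.val hηx)⟩

theorem construction_gamma_general (μ : Cardinal) (hμ : Cardinal.aleph0 ≤ μ)
    (B : Ordinal → Set Ordinal)
    (hB : ∀ β < (Order.succ μ).ord, B β ⊆ Set.Iio (Order.succ μ).ord ∧
      Cardinal.mk (B β) = Cardinal.lift.{1,0} μ) :
    ∃ (γ : Ordinal → Ordinal → Ordinal) (e : Ordinal → Ordinal → Ordinal)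
      (Ben : Ordinal → Ordinal → Set Ordinal),
      ∀ α : Ordinal, 0 < α → α < (Order.succ μ).ord →
        ((∀ η < μ.ord, e α η < α) ∧ (∀ x < α, ∃ η < μ.ord, e α η = x)) ∧
        ((∀ ε < μ.ord, ∃ β < α, Ben α ε = B β) ∧
          (∀ β < α, ∃ ε < μ.ord, Ben α ε = B β)) ∧
        (∀ ε < μ.ord, γ α ε ∈ Ben α ε ∧
          ∀ η < ε, ∀ ζ ≤ ε, γ (e α η) ζ ≠ γ α ε) := by
  set κ := (Order.succ μ).ord
  have hcard : ∀ α < κ, α.card ≤ μ := fun α hα => Order.lt_succ_iff.mp (lt_ord.mp hα)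
  choose! e he using fun α (h0 : 0 < α) (hα : α < κ) => exists_enum_Iio_of_card_le h0 (hcard α hα)
  set S : Ordinal → Ordinal → Set Ordinal := fun α ε => B (e α ε)
  refine ⟨avoidingChoice e S, e, S, fun α h0 hα => ?_⟩
  obtain ⟨he_lt, he_surj⟩ := he α h0 hα
  refine ⟨⟨he_lt, he_surj⟩, ⟨fun ε hε => ⟨e α ε, he_lt ε hε, rfl⟩, fun β hβ => ?_⟩, fun ε hε => ?_⟩
  · obtain ⟨ε, hε, rfl⟩ := he_surj β hβ
    exact ⟨ε, hε, rfl⟩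
  · have hfresh :
        (S α ε \ (fun p => avoidingChoice e S (e α p.1) p.2) '' Iio ε ×ˢ Iic ε).Nonempty := by
      refine sdiff_nonempty.2 fun hsub => (mk_le_mk_of_subset hsub).not_gt ?_
      calc #((fun p => avoidingChoice e S (e α p.1) p.2) '' Iio ε ×ˢ Iic ε)
          ≤ #(Iio ε ×ˢ Iic ε) := mk_image_le
        _ < lift μ := mk_Iio_prod_Iic_lt hμ hε
        _ = #(S α ε) := (hB _ ((he_lt ε hε).trans hα)).2.symm
    obtain ⟨hmem, hne⟩ := avoidingChoice_spec hfresh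
    exact ⟨hmem, fun η hη ζ hζ => hne η hη (he_lt η (hη.trans hε)) ζ hζ⟩

/-- The recursive construction behind the main theorem: given an enumeration
`(B_β : β < μ⁺)` of all subsets of `μ⁺` of cardinality `μ` (available since
`2^μ = μ⁺`), there are, for every `0 < α < μ⁺`, a surjective enumeration
`(e α η : η < μ)` of the ordinals below `α`, a surjective enumeration
`(Ben α ε : ε < μ)` of `{B_β : β < α}`, and ordinals `γ α ε < μ⁺` with
`γ α ε ∈ Ben α ε` and `γ α ε ∉ {γ (e α η) ζ : η < ε, ζ ≤ ε}`. -/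
theorem construction_gamma (μ : Cardinal) (hμ : Cardinal.aleph0 ≤ μ)
    (h2 : 2 ^ μ = Order.succ μ) (B : Ordinal → Set Ordinal)
    (hB : ∀ β < (Order.succ μ).ord, B β ⊆ Set.Iio (Order.succ μ).ord ∧
      Cardinal.mk (B β) = Cardinal.lift.{1,0} μ)
    (hBsurj : ∀ X : Set Ordinal, X ⊆ Set.Iio (Order.succ μ).ord →
      Cardinal.mk X = Cardinal.lift.{1,0} μ → ∃ β < (Order.succ μ).ord, B β = X) :
    ∃ (γ : Ordinal → Ordinal → Ordinal) (e : Ordinal → Ordinal → Ordinal)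
      (Ben : Ordinal → Ordinal → Set Ordinal),
      ∀ α : Ordinal, 0 < α → α < (Order.succ μ).ord →
        ((∀ η < μ.ord, e α η < α) ∧ (∀ x < α, ∃ η < μ.ord, e α η = x)) ∧
        ((∀ ε < μ.ord, ∃ β < α, Ben α ε = B β) ∧
          (∀ β < α, ∃ ε < μ.ord, Ben α ε = B β)) ∧
        (∀ ε < μ.ord, γ α ε ∈ Ben α ε ∧
          ∀ η < ε, ∀ ζ ≤ ε, γ (e α η) ζ ≠ γ α ε) :=
  construction_gamma_general μ hμ B hB
end

section
/- Let μ be a cardinal of cofinality ω and let γ(·,·), (α_η : η < μ) be as in the construction above, and define c : μ⁺ × μ⁺ → 2 by c(α,β) = 1 iff β = γ(α,ε) for some ε < μ. Suppose S = {γ_n : n ∈ ω} ⊆ μ⁺ is infinite with γ_0 < γ_1 < ⋯ and sup{η < μ : ∃ i ∈ ω, γ_i = (γ_{i+1})_η} < μ. Then the set T(S) = {β < μ⁺ : ∀ α ∈ S, c(α,β) = 1} has cardinality less than μ. -/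
open Cardinal Set

/-! Every `β ∈ T(S)` is `γ (g i) εᵢ` for all `i`. As long as `εᵢ₊₁ ≥ ρ`, property `(∗)` applied to
`g i = e (g (i+1)) η` with `η < ρ` forces `εᵢ₊₁ < εᵢ`, so by well-foundedness some `εᵢ` is below `ρ`.
Hence `T(S)` is covered by the `γ (g i) ζ` with `i ∈ ℕ` and `ζ < ρ`, fewer than `μ` ordinals. -/

theorem exists_apply_lt_of_le_imp_succ_lt {α : Type*} [LinearOrder α] [WellFoundedLT α]
    {f : ℕ → α} {b : α} (h : ∀ i, b ≤ f (i + 1) → f (i + 1) < f i) : ∃ i, f i < b := by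
  by_contra! hge
  exact not_strictAnti_of_wellFoundedLT f (strictAnti_nat_of_succ_lt fun i => h i (hge (i + 1)))

theorem exists_eq_apply_lt_of_forall_eq {A B O : Type*} [LinearOrder O] [WellFoundedLT O]
    {γ : A → O → B} {e : A → O → A} {g : ℕ → A} {ρ : O} {β : B}
    (hstar : ∀ α ε η ζ, η < ε → γ (e α η) ζ = γ α ε → ε < ζ)
    (hlink : ∀ i, ∃ η < ρ, e (g (i + 1)) η = g i)
    (hβ : ∀ i, ∃ ε, β = γ (g i) ε) : ∃ i, ∃ ζ < ρ, β = γ (g i) ζ := by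
  choose ε hε using hβ
  obtain ⟨i, hi⟩ := exists_apply_lt_of_le_imp_succ_lt (b := ρ) (f := ε) fun i hρi => by
    obtain ⟨η, hηρ, hηe⟩ := hlink i
    exact hstar (g (i + 1)) (ε (i + 1)) η (ε i) (hηρ.trans_le hρi)
      (by rw [hηe, ← hε i, ← hε (i + 1)])
  exact ⟨i, ε i, hi, hε i⟩

theorem mk_nat_prod_Iio_lt_lift {μ : Cardinal.{u}} (hμ : ℵ₀ < μ) {ρ : Ordinal.{u}}
    (hρ : ρ < μ.ord) : #(ℕ × Iio ρ) < lift.{u + 1} μ := by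
  rw [mk_prod, mk_nat, lift_aleph0, mk_Iio_ordinal, lift_lift]
  exact mul_lt_of_lt (aleph0_le_lift.2 hμ.le) (aleph0_lt_lift.2 hμ) (lift_lt.2 (lt_ord.1 hρ))

theorem TS_small_general (μ : Cardinal) (hμ : Cardinal.aleph0 < μ)
    (γ e : Ordinal → Ordinal → Ordinal)
    (hesurj : ∀ α : Ordinal, 0 < α → α < (Order.succ μ).ord →
      ∀ x < α, ∃ η < μ.ord, e α η = x)
    (hstar : ∀ α ε η ζ : Ordinal, η < ε → γ (e α η) ζ = γ α ε → ε < ζ)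
    (c : Ordinal → Ordinal → Fin 2)
    (hc : ∀ α β : Ordinal, c α β = 1 ↔ ∃ ε < μ.ord, β = γ α ε)
    (g : ℕ → Ordinal) (hg : StrictMono g)
    (hgb : ∀ n, g n < (Order.succ μ).ord)
    (hsup : ∃ ρ < μ.ord, ∀ η : Ordinal, (∃ i : ℕ, g i = e (g (i + 1)) η) → η < ρ) :
    Cardinal.mk {β : Ordinal | β < (Order.succ μ).ord ∧ ∀ i : ℕ, c (g i) β = 1} <
      Cardinal.lift.{1,0} μ := by
  obtain ⟨ρ, hρ, hρb⟩ := hsup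
  have hlink : ∀ i, ∃ η < ρ, e (g (i + 1)) η = g i := fun i => by
    have hi : g i < g (i + 1) := hg i.lt_succ_self
    obtain ⟨η, -, hη⟩ := hesurj _ (zero_le.trans_lt hi) (hgb _) _ hi
    exact ⟨η, hρb η ⟨i, hη.symm⟩, hη⟩
  have hcover : {β | β < (Order.succ μ).ord ∧ ∀ i, c (g i) β = 1} ⊆
      range fun p : ℕ × Iio ρ => γ (g p.1) p.2 := by
    rintro β ⟨-, hβ⟩
    obtain ⟨i, ζ, hζ, rfl⟩ := exists_eq_apply_lt_of_forall_eq hstar hlink fun i =>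
      ((hc _ _).1 (hβ i)).imp fun _ => And.right
    exact ⟨(i, ⟨ζ, hζ⟩), rfl⟩
  calc _ ≤ _ := mk_le_mk_of_subset hcover
    _ ≤ #(ℕ × Iio ρ) := mk_range_le
    _ < _ := mk_nat_prod_Iio_lt_lift hμ hρ

/-- Let `μ` be a singular cardinal of countable cofinality, `e` the family of
enumerations of smaller ordinals, `γ` the recursively chosen ordinals satisfying
the key injectivity property `(∗)`, and define `c : μ⁺ × μ⁺ → 2` by `c α β = 1`
iff `β = γ α ε` for some `ε < μ`.  If `S = {g n : n ∈ ω}` is an increasing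
`ω`-sequence below `μ⁺` with `sup {η : ∃ i, g i = e (g (i+1)) η} < μ`, then
`T(S) = {β < μ⁺ : ∀ α ∈ S, c α β = 1}` has cardinality less than `μ`. -/
theorem TS_small (μ : Cardinal) (hμ : Cardinal.aleph0 < μ)
    (hcf : μ.ord.cof = Cardinal.aleph0)
    (γ e : Ordinal → Ordinal → Ordinal)
    (hesurj : ∀ α : Ordinal, 0 < α → α < (Order.succ μ).ord →
      ∀ x < α, ∃ η < μ.ord, e α η = x)
    (hstar : ∀ α ε η ζ : Ordinal, η < ε → γ (e α η) ζ = γ α ε → ε < ζ)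
    (c : Ordinal → Ordinal → Fin 2)
    (hc : ∀ α β : Ordinal, c α β = 1 ↔ ∃ ε < μ.ord, β = γ α ε)
    (g : ℕ → Ordinal) (hg : StrictMono g)
    (hgb : ∀ n, g n < (Order.succ μ).ord)
    (hsup : ∃ ρ < μ.ord, ∀ η : Ordinal, (∃ i : ℕ, g i = e (g (i + 1)) η) → η < ρ) :
    Cardinal.mk {β : Ordinal | β < (Order.succ μ).ord ∧ ∀ i : ℕ, c (g i) β = 1} <
      Cardinal.lift.{1,0} μ :=
  TS_small_general μ hμ γ e hesurj hstar c hc g hg hgb hsup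
end

section
/- If an infinite cardinal κ satisfies 2^κ = κ⁺, then (κ⁺ over κ) ↛ (κ⁺ over κ)₂: there exists a coloring c : κ⁺ × κ → 2 such that for neither i ∈ {0,1} do there exist A ⊆ κ⁺ of size κ⁺ and B ⊆ κ of size κ with c constantly i on A × B. -/
/-!
Under `2 ^ κ = κ⁺` the subsets of `κ` of size `κ` can be listed as `B ξ`, `ξ < κ⁺`. Row `a < κ⁺`
of the colouring only has to split the at most `κ` sets `B ξ` with `ξ < a`, and any `κ` sets of
size `κ` can be split simultaneously: along a well-order of length `κ`, greedily pick two points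
of each set that were not picked before, and colour the first points `0`, everything else `1`.
A set `A ⊆ κ⁺` of size `κ⁺` is unbounded, so it contains a row above the index of any `B`, and
the colouring is not constant on `A × B`.
-/

open Cardinal Set

universe u v w

theorem exists_injective_forall_mem_of_mk_lt {ι : Type u} {α : Type v} {β : Type w}
    [LinearOrder β] [WellFoundedLT β] (e : ι → β) (he : Function.Injective e)
    (F : ι → Set α) (hF : ∀ i, lift.{v} #{j // e j < e i} < lift.{u} #(F i)) :
    ∃ f : ι → α, Function.Injective f ∧ ∀ i, f i ∈ F i := by
  have fresh : ∀ i (g : {j // e j < e i} → α), ∃ x ∈ F i, x ∉ range g := by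
    intro i g
    by_contra! h
    exact ((hF i).trans_le ((lift_le.2 (mk_le_mk_of_subset h)).trans mk_range_le_lift)).false
  choose step step_mem step_fresh using fresh
  let f : ι → α := (InvImage.wf e wellFounded_lt).fix fun i ih => step i fun j => ih j j.2
  have hf : ∀ i, f i = step i fun j => f j := (InvImage.wf e wellFounded_lt).fix_eq _
  refine ⟨f, fun i j hij => ?_, fun i => hf i ▸ step_mem i _⟩
  by_contra hne
  rcases (he.ne hne).lt_or_gt with h | h
  · exact step_fresh j (fun k => f k) ⟨⟨i, h⟩, hij.trans (hf j)⟩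
  · exact step_fresh i (fun k => f k) ⟨⟨j, h⟩, hij.symm.trans (hf i)⟩

theorem exists_coloring_image_nontrivial {ι : Type u} {α : Type v} {κ : Cardinal.{w}}
    (hκ : ℵ₀ ≤ κ) (F : ι → Set α) (hι : lift.{w} #ι ≤ lift.{u} κ)
    (hF : ∀ i, lift.{v} κ ≤ lift.{w} #(F i)) :
    ∃ g : α → Fin 2, ∀ i, (g '' F i).Nontrivial := by
  classical
  have hκ' : ℵ₀ ≤ lift.{u} κ := aleph0_le_lift.2 hκ
  obtain ⟨e⟩ : Nonempty (ι × Fin 2 ↪ κ.ord.ToType) := by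
    rw [← lift_mk_le', mk_ord_toType, mk_prod, lift_mul, lift_lift, mk_fin, lift_natCast,
      lift_natCast]
    calc lift.{w} #ι * 2 ≤ lift.{u} κ * 2 := mul_le_mul_left hι 2
      _ = lift.{u} κ := mul_eq_left hκ' (natCast_le_aleph0.trans hκ') two_ne_zero
  have hsmall : ∀ p, lift.{w} #{q // e q < e p} < lift.{u} κ := fun p =>
    (lift_mk_le'.2 ⟨e.subtypeMap (q := (· ∈ Iio (e p))) fun _ h => h⟩).trans_lt
      (lift_lt.2 (by simpa using mk_Iio_lt (e p) : #(Iio (e p)) < κ))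
  obtain ⟨f, hf_inj, hf_mem⟩ := exists_injective_forall_mem_of_mk_lt e e.injective
    (fun p => F p.1) fun p => by
      have h₁ := lift_lt.{_, v}.2 (hsmall p)
      have h₂ := lift_le.{u}.2 (hF p.1)
      rw [← lift_lt.{_, w}]
      simp only [lift_lift] at h₁ h₂ ⊢
      exact h₁.trans_le h₂
  refine ⟨fun x => if x ∈ range (fun i => f (i, 0)) then 0 else 1, fun i => ?_⟩
  refine nontrivial_of_mem_mem_ne (mem_image_of_mem _ (hf_mem (i, 0)))
    (mem_image_of_mem _ (hf_mem (i, 1))) ?_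
  rw [if_pos ⟨i, rfl⟩, if_neg]
  · decide
  · rintro ⟨j, hj⟩
    cases hf_inj hj

theorem exists_row_colorings {T : Type u} {β : Type v} {κ : Cardinal.{w}} (hκ : ℵ₀ ≤ κ)
    (F : T → Set β) (hF : ∀ t, lift.{v} κ ≤ lift.{w} #(F t)) (e : T → Ordinal.{w})
    (he : Function.Injective e) :
    ∃ c : Ordinal.{w} → β → Fin 2, ∀ a, a.card ≤ κ → ∀ t, e t < a → (c a '' F t).Nontrivial := by
  have row : ∀ a : Ordinal.{w}, ∃ g : β → Fin 2,
      a.card ≤ κ → ∀ t : {t // e t < a}, (g '' F t).Nontrivial := by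
    intro a
    by_cases ha : a.card ≤ κ
    · have hbelow : lift.{w} #{t // e t < a} ≤ lift.{u} κ := by
        have h := lift_mk_le'.2
          ⟨(⟨e, he⟩ : T ↪ Ordinal.{w}).subtypeMap (q := (· ∈ Iio a)) fun _ h => h⟩
        rw [mk_Iio_ordinal, lift_lift] at h
        rw [← lift_le.{w + 1}, lift_lift, lift_lift]
        exact h.trans (lift_le.2 ha)
      obtain ⟨g, hg⟩ := exists_coloring_image_nontrivial hκ (fun t : {t // e t < a} => F t)
        hbelow fun t => hF t
      exact ⟨g, fun _ => hg⟩
    · exact ⟨fun _ => 0, fun h => absurd h ha⟩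
  choose c hc using row
  exact ⟨c, fun a ha t ht => hc a ha ⟨t, ht⟩⟩

theorem exists_mem_gt_of_lift_le_mk {c : Cardinal.{u}} (hc : ℵ₀ ≤ c) {A : Set Ordinal.{u}}
    (hA : lift.{u + 1} c ≤ #A) {ξ : Ordinal.{u}} (hξ : ξ < c.ord) : ∃ a ∈ A, ξ < a := by
  by_contra! h
  have hsub : A ⊆ Iio (Order.succ ξ) := fun a ha => Order.lt_succ_iff.2 (h a ha)
  have h' := hA.trans (mk_le_mk_of_subset hsub)
  rw [mk_Iio_ordinal, lift_le] at h'
  exact (lt_ord.1 ((isSuccLimit_ord hc).succ_lt hξ)).not_ge h'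

theorem mk_powerset_Iio_ord (c : Cardinal.{u}) : #(𝒫 Iio c.ord) = lift.{u + 1} (2 ^ c) := by
  rw [mk_powerset, mk_Iio_ordinal, card_ord, lift_power, lift_two]

/-- The Erdős–Hajnal–Rado negative relation: if `κ` is an infinite cardinal with
`2^κ = κ⁺`, then `(κ⁺ over κ) ↛ (κ⁺ over κ)₂`: there is a coloring
`c : κ⁺ × κ → 2` such that for neither color `i` is there a product `A × B` with
`|A| = κ⁺`, `|B| = κ` on which `c` is constantly `i`. -/
theorem strong_polarized_fails (κ : Cardinal) (hκ : Cardinal.aleph0 ≤ κ)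
    (h2 : 2 ^ κ = Order.succ κ) :
    ∃ c : Ordinal → Ordinal → Fin 2, ∀ i : Fin 2,
      ¬∃ A B : Set Ordinal, A ⊆ Set.Iio (Order.succ κ).ord ∧
        B ⊆ Set.Iio κ.ord ∧
        Cardinal.mk A = Cardinal.lift.{1,0} (Order.succ κ) ∧
        Cardinal.mk B = Cardinal.lift.{1,0} κ ∧
        ∀ a ∈ A, ∀ b ∈ B, c a b = i := by
  let 𝒯 : Set (Set Ordinal) := {B | B ⊆ Iio κ.ord ∧ #B = lift κ}
  obtain ⟨e⟩ : Nonempty (𝒯 ↪ Iio (Order.succ κ).ord) := by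
    rw [← le_def, mk_Iio_ordinal, card_ord, ← h2, ← mk_powerset_Iio_ord]
    exact mk_le_mk_of_subset fun B hB => hB.1
  obtain ⟨c, hc⟩ := exists_row_colorings hκ (fun B : 𝒯 => (B : Set Ordinal))
    (fun B => by simpa using B.2.2.ge) (fun B => e B) (Subtype.val_injective.comp e.injective)
  refine ⟨c, fun i ⟨A, B, hA, hB, hAcard, hBcard, hconst⟩ => ?_⟩
  obtain ⟨a, haA, hBa⟩ :=
    exists_mem_gt_of_lift_le_mk (hκ.trans (Order.le_succ κ)) hAcard.ge (e ⟨B, hB, hBcard⟩).2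
  have hrow := hc a (Order.lt_succ_iff.1 (lt_ord.1 (hA haA))) ⟨B, hB, hBcard⟩ hBa
  exact hrow.not_subset_singleton (image_subset_iff.2 fun b hb => hconst a haA b hb)
end
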